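/- arXiv:2107.11804 — 5 statements merged into one kernel-verified Lean document; each statement's English description precedes it below -/
import Mathlib

section
/- Let α ∈ (0,1). The map θ ↦ (1−e^{−iθ})^α is injective on [0,2π). Moreover, for every θ ∈ [0,2π) one has |(1−e^{−iθ})^α| ≤ 2^α, with equality if and only if θ = π; and for every θ ∈ (0,2π) the principal argument satisfies |Arg((1−e^{−iθ})^α)| < απ/2. In particular the image of the map is contained in the closure of the sector {z ∈ ℂ : |Arg z| < απ/2} intersected with the closed ball of radius 2^α centered at 0. -/
open Real

/-!
For `θ ∈ (0, 2π)`, `1 - e^{-iθ} = 2 sin (θ/2) · e^{i(π/2 - θ/2)}` is in polar form, with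
modulus `2 sin (θ/2) ≤ 2` and argument `π/2 - θ/2 ∈ (-π/2, π/2)`. Since `0 < α ≤ 1`, the principal
power `z ↦ z ^ α` multiplies every argument in `(-π, π]` by `α` without wrapping around, so it is
injective on `ℂ` and the bounds on modulus and argument carry over to `(1 - e^{-iθ}) ^ α`.
-/

theorem Real.abs_sin_half_eq_one_iff {θ : ℝ} (hθ : θ ∈ Set.Ico 0 (2 * π)) :
    |sin (θ / 2)| = 1 ↔ θ = π := by
  refine ⟨fun h => ?_, fun h => by simp [h]⟩
  obtain ⟨k, hk⟩ := abs_sin_eq_one_iff.1 h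
  have hk0 : k = 0 := by
    rw [← Int.abs_lt_one_iff, ← Int.cast_lt (R := ℝ), Int.cast_abs, Int.cast_one, abs_lt]
    constructor <;> nlinarith [pi_pos, hθ.1, hθ.2]
  simp only [hk0, Int.cast_zero, zero_mul, add_zero] at hk
  linarith

namespace Complex

theorem arg_cpow_ofReal {y : ℝ} (hy₀ : 0 < y) (hy₁ : y ≤ 1) (x : ℂ) :
    arg (x ^ (y : ℂ)) = arg x * y := by
  rcases eq_or_ne x 0 with rfl | hx
  · simp [zero_cpow (ofReal_ne_zero.2 hy₀.ne')]
  have hmem : arg x * y ∈ Set.Ioc (-π) π := by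
    obtain ⟨hlo, hhi⟩ := arg_mem_Ioc x
    constructor <;> nlinarith [pi_pos]
  rw [cpow_ofReal, ofReal_cos, ofReal_sin,
    arg_mul_cos_add_sin_mul_I (rpow_pos_of_pos (norm_pos_iff.2 hx) y) hmem]

theorem cpow_ofReal_injective {y : ℝ} (hy₀ : 0 < y) (hy₁ : y ≤ 1) :
    Function.Injective fun x : ℂ => x ^ (y : ℂ) := by
  intro x x' h
  apply ext_norm_arg
  · have hnorm := congrArg norm h
    simp only [norm_cpow_real] at hnorm
    exact (rpow_left_inj (norm_nonneg x) (norm_nonneg x') hy₀.ne').1 hnorm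
  · have harg := congrArg arg h
    simp only [arg_cpow_ofReal hy₀ hy₁] at harg
    exact mul_right_cancel₀ hy₀.ne' harg

theorem injOn_exp_neg_mul_I : Set.InjOn (fun θ : ℝ => exp (-θ * I)) (Set.Ico 0 (2 * π)) := by
  intro a ha b hb h
  have hcirc : Circle.exp (-a) = Circle.exp (-b) := Circle.ext (by push_cast; simpa using h)
  have := Circle.exp_injOn_Ioc (a := -(2 * π)) (b := 0) (by linarith)
    ⟨by linarith [ha.2], by linarith [ha.1]⟩ ⟨by linarith [hb.2], by linarith [hb.1]⟩ hcirc
  linarith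

theorem one_sub_exp_neg_mul_I (θ : ℝ) :
    1 - exp (-θ * I) = ↑(2 * Real.sin (θ / 2)) * exp (↑(π / 2 - θ / 2) * I) := by
  have hI : exp (↑(π / 2 - θ / 2) * I) = exp (π / 2 * I) * exp (-(θ / 2) * I) := by
    rw [← exp_add]; push_cast; ring_nf
  have hsq : exp (-θ * I) = exp (-(θ / 2) * I) * exp (-(θ / 2) * I) := by
    rw [← exp_add]; ring_nf
  have hinv : exp (θ / 2 * I) * exp (-(θ / 2) * I) = 1 := by
    rw [← exp_add]; ring_nf; exact exp_zero
  rw [hI, exp_pi_div_two_mul_I, hsq, ofReal_mul, ofReal_sin, sin]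
  push_cast
  linear_combination (-1 : ℂ) * hinv +
    (exp (-(θ / 2) * I) * exp (θ / 2 * I) - exp (-(θ / 2) * I) ^ 2) * I_sq

theorem norm_one_sub_exp_neg_mul_I (θ : ℝ) :
    ‖1 - exp (-θ * I)‖ = 2 * |Real.sin (θ / 2)| := by
  rw [one_sub_exp_neg_mul_I, norm_mul, norm_exp_ofReal_mul_I, mul_one, norm_real,
    Real.norm_eq_abs, abs_mul, abs_two]

theorem arg_one_sub_exp_neg_mul_I {θ : ℝ} (hθ : θ ∈ Set.Ioo 0 (2 * π)) :
    arg (1 - exp (-θ * I)) = π / 2 - θ / 2 := by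
  have hsin : 0 < 2 * Real.sin (θ / 2) :=
    mul_pos two_pos (sin_pos_of_pos_of_lt_pi (by linarith [hθ.1]) (by linarith [hθ.2]))
  rw [one_sub_exp_neg_mul_I, arg_real_mul _ hsin, arg_exp_mul_I, toIocMod_eq_self]
  constructor <;> linarith [hθ.1, hθ.2]

end Complex

theorem stmt1 (α : ℝ) (hα : α ∈ Set.Ioo (0 : ℝ) 1) :
    Set.InjOn (fun θ : ℝ => (1 - Complex.exp (-(θ : ℂ) * Complex.I)) ^ (α : ℂ))
      (Set.Ico 0 (2 * π)) ∧
    (∀ θ ∈ Set.Ico (0 : ℝ) (2 * π),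
      ‖(1 - Complex.exp (-(θ : ℂ) * Complex.I)) ^ (α : ℂ)‖ ≤ (2 : ℝ) ^ α ∧
      (‖(1 - Complex.exp (-(θ : ℂ) * Complex.I)) ^ (α : ℂ)‖ = (2 : ℝ) ^ α ↔
        θ = π)) ∧
    (∀ θ ∈ Set.Ioo (0 : ℝ) (2 * π),
      |Complex.arg ((1 - Complex.exp (-(θ : ℂ) * Complex.I)) ^ (α : ℂ))| < α * π / 2) ∧
    (fun θ : ℝ => (1 - Complex.exp (-(θ : ℂ) * Complex.I)) ^ (α : ℂ)) ''
        (Set.Ico 0 (2 * π)) ⊆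
      closure {z : ℂ | |Complex.arg z| < α * π / 2} ∩
        Metric.closedBall (0 : ℂ) ((2 : ℝ) ^ α) := by
  obtain ⟨hα₀, hα₁⟩ := hα
  have hnorm (θ : ℝ) :
      ‖(1 - Complex.exp (-(θ : ℂ) * Complex.I)) ^ (α : ℂ)‖ = (2 * |sin (θ / 2)|) ^ α := by
    rw [Complex.norm_cpow_real, Complex.norm_one_sub_exp_neg_mul_I]
  have hnorm_le (θ : ℝ) :
      ‖(1 - Complex.exp (-(θ : ℂ) * Complex.I)) ^ (α : ℂ)‖ ≤ (2 : ℝ) ^ α := by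
    rw [hnorm]
    gcongr
    linarith [abs_sin_le_one (θ / 2)]
  have harg : ∀ θ ∈ Set.Ioo (0 : ℝ) (2 * π),
      |Complex.arg ((1 - Complex.exp (-(θ : ℂ) * Complex.I)) ^ (α : ℂ))| < α * π / 2 := by
    intro θ hθ
    rw [Complex.arg_cpow_ofReal hα₀ hα₁.le, Complex.arg_one_sub_exp_neg_mul_I hθ, abs_lt]
    constructor <;> nlinarith [hθ.1, hθ.2]
  refine ⟨?_, fun θ hθ => ⟨hnorm_le θ, ?_⟩, harg, ?_⟩
  · exact (Complex.cpow_ofReal_injective hα₀ hα₁.le).comp_injOn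
      (sub_right_injective.comp_injOn Complex.injOn_exp_neg_mul_I)
  · rw [hnorm, rpow_left_inj (by positivity) zero_le_two hα₀.ne', ← abs_sin_half_eq_one_iff hθ]
    constructor <;> intro h <;> linarith
  · rintro _ ⟨θ, hθ, rfl⟩
    refine ⟨subset_closure ?_, mem_closedBall_zero_iff.2 (hnorm_le θ)⟩
    rcases hθ.1.eq_or_lt with rfl | hθ₀
    · simp only [Set.mem_ofPred_eq, Complex.ofReal_zero, neg_zero, zero_mul, Complex.exp_zero,
        sub_self, Complex.zero_cpow (Complex.ofReal_ne_zero.2 hα₀.ne'), Complex.arg_zero, abs_zero]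
      positivity
    · exact harg θ ⟨hθ₀, hθ.2⟩
end

section
/- Let α ∈ (0,1). Then the set {η ∈ ℂ : there exists ζ ∈ ℂ with |1−ζ| < 1 and ζ^α = η} is equal to the connected component containing the point 1/2 of the set {η ∈ ℂ : |1−η^{1/α}| < 1} (note that the real segment (0,1), and in particular 1/2, belongs to both sets). -/
/-!
The disc `|1 - ζ| < 1` lies in the right half-plane, so `ζ ↦ ζ^α` maps it bijectively,
with inverse `η ↦ η^(1/α)`, onto `{η ∈ T : |arg η| < απ/2}`, where `T = {η : |1 - η^(1/α)| < 1}`.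
This image is connected, contains `1/2` and lies in `T`.
Conversely `T` avoids `0` and the rays `|arg η| = απ/2`, on which `η^(1/α)` is purely imaginary.
Hence a continuous function that is positive exactly on the open sector `|arg η| < απ/2` has no
zero on `T`, so by the intermediate value theorem it stays positive on the component of `1/2`,
which is therefore contained in the image.
-/

open Complex Set
open scoped Real

lemma connectedComponentIn_subset_setOf_pos {X : Type*} [TopologicalSpace X] {T : Set X}
    {f : X → ℝ} {x : X} (hf : ContinuousOn f T) (hf0 : ∀ y ∈ T, f y ≠ 0) (hx : 0 < f x) :
    connectedComponentIn T x ⊆ {y | 0 < f y} := by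
  intro y hy
  by_contra hy0
  have hxT : x ∈ T := connectedComponentIn_nonempty_iff.mp ⟨y, hy⟩
  obtain ⟨z, hzC, hz⟩ := isPreconnected_connectedComponentIn.intermediate_value hy
    (mem_connectedComponentIn hxT) (hf.mono (connectedComponentIn_subset T x))
    ⟨not_lt.mp hy0, hx.le⟩
  exact hf0 z (connectedComponentIn_subset T x hzC) hz

namespace Complex

lemma re_pos_of_norm_one_sub_lt_one {w : ℂ} (hw : ‖1 - w‖ < 1) : 0 < w.re := by
  have := re_le_norm (1 - w)
  rw [sub_re, one_re] at this
  linarith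

lemma isPreconnected_image_cpow_ball (y : ℂ) :
    IsPreconnected ((· ^ y) '' {ζ : ℂ | ‖1 - ζ‖ < 1}) := by
  have hball : {ζ : ℂ | ‖1 - ζ‖ < 1} = Metric.ball 1 1 := by
    ext ζ
    rw [mem_ofPred_eq, Metric.mem_ball, dist_comm, dist_eq_norm]
  refine (hball ▸ (convex_ball (1 : ℂ) 1).isPreconnected).image _ fun ζ hζ => ?_
  exact (continuousAt_cpow_const
    (mem_slitPlane_iff.mpr (.inl (re_pos_of_norm_one_sub_lt_one hζ)))).continuousWithinAt

lemma norm_one_sub_ofReal_cpow_lt_one {x β : ℝ} (hx0 : 0 < x) (hx1 : x < 1) (hβ : 0 < β) :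
    ‖1 - (x : ℂ) ^ (β : ℂ)‖ < 1 := by
  have h0 : 0 < x ^ β := Real.rpow_pos_of_pos hx0 β
  have h1 : x ^ β < 1 := Real.rpow_lt_one hx0.le hx1 hβ
  rw [← ofReal_cpow hx0.le, ← ofReal_one, ← ofReal_sub, norm_real, Real.norm_eq_abs, abs_lt]
  constructor <;> linarith

lemma cpow_ofReal_cpow_inv {z : ℂ} {β : ℝ} (hβ : β ≠ 0) (h : |z.arg * β| < π) :
    (z ^ (β : ℂ)) ^ (β : ℂ)⁻¹ = z := by
  have him : (log z * β).im = z.arg * β := by rw [im_mul_ofReal, log_im]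
  obtain ⟨h₁, h₂⟩ := abs_lt.mp h
  rw [← cpow_mul _ (him ▸ h₁) (him ▸ h₂.le), mul_inv_cancel₀ (ofReal_ne_zero.mpr hβ), cpow_one]

/-- Equal to `‖z‖ * sin (θ - |arg z|)` (`sectorGap_eq`), but visibly continuous on all of `ℂ`. -/
noncomputable def sectorGap (θ : ℝ) (z : ℂ) : ℝ := z.re * Real.sin θ - |z.im| * Real.cos θ

lemma continuous_sectorGap (θ : ℝ) : Continuous (sectorGap θ) := by
  unfold sectorGap
  fun_prop

lemma sectorGap_eq (θ : ℝ) (z : ℂ) : sectorGap θ z = ‖z‖ * Real.sin (θ - |z.arg|) := by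
  rw [sectorGap, Real.sin_sub, Real.cos_abs,
    ← Real.abs_sin_eq_sin_abs_of_abs_le_pi (abs_arg_le_pi z), ← norm_mul_cos_arg z,
    ← norm_mul_sin_arg z, abs_mul, abs_norm]
  ring

lemma sectorGap_ofReal_pos {θ : ℝ} (hθ : θ ∈ Ioo 0 π) {x : ℝ} (hx : 0 < x) :
    0 < sectorGap θ x := by
  rw [sectorGap, ofReal_re, ofReal_im, abs_zero, zero_mul, sub_zero]
  exact mul_pos hx (Real.sin_pos_of_pos_of_lt_pi hθ.1 hθ.2)

lemma abs_arg_lt_of_sectorGap_pos {θ : ℝ} (hθ : 0 ≤ θ) {z : ℂ} (h : 0 < sectorGap θ z) :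
    |z.arg| < θ := by
  by_contra hle
  rw [sectorGap_eq] at h
  have := Real.sin_nonpos_of_nonpos_of_neg_pi_le (x := θ - |z.arg|) (by linarith)
    (by linarith [abs_arg_le_pi z])
  nlinarith [norm_nonneg z]

lemma abs_arg_eq_of_sectorGap_eq_zero {θ : ℝ} (hθ : θ ∈ Ioo 0 π) {z : ℂ} (hz : z ≠ 0)
    (h : sectorGap θ z = 0) : |z.arg| = θ := by
  rw [sectorGap_eq, mul_eq_zero, norm_eq_zero, Real.sin_eq_zero_iff_of_lt_of_lt
    (by linarith [abs_arg_le_pi z, hθ.1]) (by linarith [abs_nonneg z.arg, hθ.2])] at h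
  linarith [h.resolve_left hz]

section Power

variable {α : ℝ}

lemma cpow_cpow_one_div_of_norm_one_sub_lt_one (hα0 : 0 < α) (hα2 : α ≤ 2) {ζ : ℂ}
    (hζ : ‖1 - ζ‖ < 1) : (ζ ^ (α : ℂ)) ^ (1 / (α : ℂ)) = ζ := by
  have harg : |ζ.arg| < π / 2 :=
    abs_arg_lt_pi_div_two_iff.mpr (.inl (re_pos_of_norm_one_sub_lt_one hζ))
  rw [one_div]
  refine cpow_ofReal_cpow_inv hα0.ne' ?_
  rw [abs_mul, abs_of_pos hα0]
  nlinarith [Real.pi_pos]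

lemma mem_image_cpow_of_abs_arg_lt (hα : 0 < α) {η : ℂ}
    (hη : ‖1 - η ^ (1 / (α : ℂ))‖ < 1) (harg : |η.arg| < α * π) :
    η ∈ (· ^ (α : ℂ)) '' {ζ : ℂ | ‖1 - ζ‖ < 1} := by
  refine ⟨_, hη, ?_⟩
  have key := cpow_ofReal_cpow_inv (z := η) (inv_ne_zero hα.ne') (by
    rw [abs_mul, abs_inv, abs_of_pos hα, ← div_eq_mul_inv, div_lt_iff₀ hα, mul_comm]
    exact harg)
  rwa [ofReal_inv, inv_inv, ← one_div] at key

lemma one_le_norm_one_sub_cpow_one_div_of_abs_arg_eq (hα : 0 < α) {η : ℂ}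
    (harg : |η.arg| = α * (π / 2)) : 1 ≤ ‖1 - η ^ (1 / (α : ℂ))‖ := by
  have hre : (η ^ (1 / (α : ℂ))).re = 0 := by
    have hcos : Real.cos (η.arg * α⁻¹) = 0 := by
      rw [← Real.cos_abs, abs_mul, harg, abs_inv, abs_of_pos hα, mul_comm α,
        mul_assoc, mul_inv_cancel₀ hα.ne', mul_one, Real.cos_pi_div_two]
    rw [one_div, ← ofReal_inv, cpow_ofReal_re, hcos, mul_zero]
  by_contra h
  exact (re_pos_of_norm_one_sub_lt_one (not_le.mp h)).ne' hre

lemma sectorGap_ne_zero_of_norm_one_sub_cpow_one_div_lt_one (hα0 : 0 < α) (hα2 : α < 2)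
    {η : ℂ} (hη : ‖1 - η ^ (1 / (α : ℂ))‖ < 1) : sectorGap (α * (π / 2)) η ≠ 0 := by
  intro h
  have hη0 : η ≠ 0 := by
    rintro rfl
    rw [zero_cpow (one_div_ne_zero (ofReal_ne_zero.mpr hα0.ne')), sub_zero, norm_one] at hη
    exact hη.false
  have hθ : α * (π / 2) ∈ Ioo 0 π := ⟨by positivity, by nlinarith [Real.pi_pos]⟩
  exact (one_le_norm_one_sub_cpow_one_div_of_abs_arg_eq hα0
    (abs_arg_eq_of_sectorGap_eq_zero hθ hη0 h)).not_gt hη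

end Power

end Complex

theorem stmt3 (α : ℝ) (hα : α ∈ Set.Ioo (0 : ℝ) 1) :
    {η : ℂ | ∃ ζ : ℂ, ‖1 - ζ‖ < 1 ∧ ζ ^ (α : ℂ) = η} =
      connectedComponentIn
        {η : ℂ | ‖1 - η ^ (1 / (α : ℂ))‖ < 1} ((1 : ℂ) / 2) := by
  obtain ⟨hα0, hα1⟩ := hα
  set T := {η : ℂ | ‖1 - η ^ (1 / (α : ℂ))‖ < 1}
  have hθ : α * (π / 2) ∈ Ioo 0 π := ⟨by positivity, by nlinarith [Real.pi_pos]⟩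
  have hAT : (· ^ (α : ℂ)) '' {ζ : ℂ | ‖1 - ζ‖ < 1} ⊆ T := by
    rintro _ ⟨ζ, hζ, rfl⟩
    show ‖1 - (ζ ^ (α : ℂ)) ^ (1 / (α : ℂ))‖ < 1
    rwa [cpow_cpow_one_div_of_norm_one_sub_lt_one hα0 (by linarith) hζ]
  have hTA : ∀ η ∈ T, 0 < sectorGap (α * (π / 2)) η →
      η ∈ (· ^ (α : ℂ)) '' {ζ : ℂ | ‖1 - ζ‖ < 1} := fun η hη hpos =>
    mem_image_cpow_of_abs_arg_lt hα0 hη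
      ((abs_arg_lt_of_sectorGap_pos hθ.1.le hpos).trans (by nlinarith [Real.pi_pos]))
  have hhalfT : (1 / 2 : ℂ) ∈ T := by
    show ‖1 - (1 / 2 : ℂ) ^ (1 / (α : ℂ))‖ < 1
    simpa using norm_one_sub_ofReal_cpow_lt_one (x := 1 / 2) (β := α⁻¹) (by norm_num)
      (by norm_num) (inv_pos.mpr hα0)
  have hhalfpos : 0 < sectorGap (α * (π / 2)) (1 / 2) := by
    simpa using sectorGap_ofReal_pos hθ one_half_pos
  refine ((isPreconnected_image_cpow_ball _).subset_connectedComponentIn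
    (hTA _ hhalfT hhalfpos) hAT).antisymm fun η hη => hTA η (connectedComponentIn_subset T _ hη) ?_
  exact connectedComponentIn_subset_setOf_pos (continuous_sectorGap _).continuousOn
    (fun η hη => sectorGap_ne_zero_of_norm_one_sub_cpow_one_div_lt_one hα0 (by linarith) hη)
    hhalfpos hη
end

section
/- Let α ∈ (0,1) and let K be a general inter-arrival law with exponent α, with partition function Z_{N,h}. Then for every ε > 0 the functions h ↦ Z_{N,h}/K(N) converge, as N → ∞, to h ↦ e^h/(1−e^h)², uniformly on the half-plane {h ∈ ℂ : Re h ≤ −ε}. In particular, for every fixed h with Re h < 0, Z_{N,h}/K(N) → e^h/(1−e^h)² as N → ∞. -/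
open Filter

/-- The pinning partition function. -/
noncomputable def pinZ (K : ℕ → ℝ) (N : ℕ) (h : ℂ) : ℂ :=
  ∑ k ∈ Finset.Icc 1 N, Complex.exp ((k : ℂ) * h) *
    ∑ ℓ ∈ (Finset.Nat.antidiagonalTuple k N).filter (fun ℓ => ∀ i, 1 ≤ ℓ i),
      ∏ i, (K (ℓ i) : ℂ)

/-- A general inter-arrival law with exponent `α`. -/
def IsInterArrivalLaw (α : ℝ) (K : ℕ → ℝ) : Prop :=
  (∀ n, 1 ≤ n → 0 ≤ K n) ∧ 0 < K 1 ∧ HasSum (fun n : ℕ => K (n + 1)) 1 ∧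
    ∃ c : ℝ, 0 < c ∧ Tendsto (fun n : ℕ => (n : ℝ) ^ (1 + α) * K n) atTop (nhds c)

/-!
Write `K^{*k}(N)` for the total weight of `k` jumps `≥ 1` summing to `N`, so that
`Z_{N,h} = ∑_k e^{kh} K^{*k}(N)`. A power-law tail is subexponential: `K^{*k}(N) / K(N) → k`
for each `k`, since `k` jumps reach `N` essentially only when one of them alone is large.
Induction on `k` also gives `K^{*k}(N) ≤ C k^{2+α} K(N)` uniformly in `N`, which is summable
against `e^{-εk}`; dominated convergence then yields
`Z_{N,h} / K(N) → ∑_k k e^{kh} = e^h / (1 - e^h)^2`, uniformly on `Re h ≤ -ε`.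
-/

namespace Pinning

open Finset Topology

-- `K^{*k}(N)`; only jumps `≥ 1` occur, so `K 0` plays no role.
noncomputable def convPow (K : ℕ → ℝ) (k N : ℕ) : ℝ :=
  ∑ ℓ ∈ (Nat.antidiagonalTuple k N).filter (fun ℓ => ∀ i, 1 ≤ ℓ i), ∏ i, K (ℓ i)

lemma pinZ_eq_sum_convPow (K : ℕ → ℝ) (N : ℕ) (h : ℂ) :
    pinZ K N h = ∑ k ∈ Icc 1 N, Complex.exp h ^ k * (convPow K k N : ℂ) := by
  simp only [pinZ, convPow, Complex.ofReal_sum, Complex.ofReal_prod, Complex.exp_nat_mul]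

lemma convPow_zero (K : ℕ → ℝ) (N : ℕ) : convPow K 0 N = if N = 0 then 1 else 0 := by
  rcases N with _ | N <;> simp [convPow, Nat.antidiagonalTuple_zero_right]

lemma convPow_succ (K : ℕ → ℝ) (k N : ℕ) :
    convPow K (k + 1) N = ∑ m ∈ Icc 1 N, K m * convPow K k (N - m) := by
  simp only [convPow, mul_sum]
  rw [sum_sigma']
  refine sum_nbij' (fun ℓ => ⟨ℓ 0, Fin.tail ℓ⟩) (fun x => Fin.cons x.1 x.2) ?_ ?_
    (fun ℓ _ => Fin.cons_self_tail ℓ) (fun _ _ => by simp) ?_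
  · intro ℓ hℓ
    simp only [mem_filter, Nat.mem_antidiagonalTuple, Fin.sum_univ_succ] at hℓ
    simp only [mem_sigma, mem_Icc, mem_filter, Nat.mem_antidiagonalTuple, Fin.tail]
    exact ⟨⟨hℓ.2 0, by omega⟩, by omega, fun i => hℓ.2 i.succ⟩
  · rintro ⟨m, ℓ⟩ hx
    simp only [mem_sigma, mem_Icc, mem_filter, Nat.mem_antidiagonalTuple] at hx
    simp only [mem_filter, Nat.mem_antidiagonalTuple, Fin.sum_univ_succ,
      Fin.cons_zero, Fin.cons_succ, Fin.forall_fin_succ]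
    exact ⟨by omega, hx.1.1, hx.2.2⟩
  · intro ℓ _
    simp [Fin.prod_univ_succ, Fin.tail]

lemma convPow_succ_eq_sum_range (K : ℕ → ℝ) (k N : ℕ) :
    convPow K (k + 1) N =
      ∑ m ∈ range (N + 1), Function.update K 0 0 m * convPow K k (N - m) := by
  rw [convPow_succ, range_eq_Ico, ← Ico_add_one_right_eq_Icc,
    sum_eq_sum_Ico_succ_bot (Nat.succ_pos N)]
  simp only [Function.update_self, zero_mul, zero_add]
  refine sum_congr rfl fun m hm => ?_
  rw [Function.update_of_ne (by grind)]

lemma convPow_one (K : ℕ → ℝ) {N : ℕ} (hN : 1 ≤ N) : convPow K 1 N = K N := by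
  rw [convPow_succ_eq_sum_range, sum_eq_single_of_mem N (self_mem_range_succ N)]
  · simp [convPow_zero, Function.update_of_ne (by omega : N ≠ 0)]
  · intro m hm hmN
    rw [convPow_zero, if_neg (by grind), mul_zero]

lemma convPow_eq_zero_of_lt (K : ℕ → ℝ) {k N : ℕ} (h : N < k) : convPow K k N = 0 := by
  induction k generalizing N with
  | zero => omega
  | succ k ih =>
    rw [convPow_succ]
    exact sum_eq_zero fun m hm => by rw [ih (by grind), mul_zero]

lemma convPow_nonneg {K : ℕ → ℝ} (hK : ∀ n, 1 ≤ n → 0 ≤ K n) (k N : ℕ) : 0 ≤ convPow K k N :=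
  sum_nonneg fun _ hℓ => prod_nonneg fun i _ => hK _ ((mem_filter.mp hℓ).2 i)

lemma update_zero_nonneg {K : ℕ → ℝ} (hK : ∀ n, 1 ≤ n → 0 ≤ K n) (n : ℕ) :
    0 ≤ Function.update K 0 0 n := by
  rcases Nat.eq_zero_or_pos n with rfl | hn
  · simp
  · rw [Function.update_of_ne hn.ne']
    exact hK n hn

lemma hasSum_update_zero {K : ℕ → ℝ} {a : ℝ} (hsum : HasSum (fun n => K (n + 1)) a) :
    HasSum (Function.update K 0 0) a := by
  rw [← hasSum_nat_add_iff' 1]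
  simpa [Function.update_of_ne] using hsum

lemma hasSum_convPow {K : ℕ → ℝ} (hsum : HasSum (fun n => K (n + 1)) 1) (k : ℕ) :
    HasSum (convPow K k) 1 := by
  have hK' := hasSum_update_zero hsum
  induction k with
  | zero =>
    simpa [funext (convPow_zero K)] using hasSum_ite_eq 0 (1 : ℝ)
  | succ k ih =>
    have := hasSum_sum_range_mul_of_summable_norm hK'.summable.norm ih.summable.norm
    rw [hK'.tsum_eq, ih.tsum_eq, one_mul] at this
    simpa only [← convPow_succ_eq_sum_range] using this

section PowerLaw

variable {f g : ℕ → ℝ} {A B β : ℝ}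

lemma le_mul_rpow_neg_of_le (hβ : 0 ≤ β) (hA : 0 ≤ A) (hf : ∀ n, 1 ≤ n → f n ≤ A * n ^ (-β))
    {x : ℝ} {n : ℕ} (hx : 0 < x) (hxn : x ≤ n) : f n ≤ A * x ^ (-β) :=
  (hf n (by exact_mod_cast hx.trans_le hxn)).trans <|
    mul_le_mul_of_nonneg_left (Real.rpow_le_rpow_of_nonpos hx hxn (by linarith)) hA

/-- In `∑ f m g (N - m)` one of `m ≥ t N` or `N - m > (1 - t) N` holds: bound the factor
with the large argument by its power law and sum the other factor. -/
lemma sum_range_mul_le_rpow {F G t : ℝ} (hβ : 0 ≤ β) (hA : 0 ≤ A) (hB : 0 ≤ B)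
    (ht0 : 0 < t) (ht1 : t < 1) (hf0 : ∀ n, 0 ≤ f n) (hg0 : ∀ n, 0 ≤ g n)
    (hF : HasSum f F) (hG : HasSum g G)
    (hf : ∀ n, 1 ≤ n → f n ≤ A * n ^ (-β)) (hg : ∀ n, 1 ≤ n → g n ≤ B * n ^ (-β))
    {N : ℕ} (hN : 1 ≤ N) :
    ∑ m ∈ range (N + 1), f m * g (N - m) ≤
      (A * t ^ (-β) * G + F * (B * (1 - t) ^ (-β))) * (N : ℝ) ^ (-β) := by
  have hN0 : (0 : ℝ) < N := by exact_mod_cast hN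
  set s := (range (N + 1)).filter (fun m : ℕ => t * N ≤ m)
  have hbig : ∑ m ∈ s, f m * g (N - m) ≤ A * (t * N) ^ (-β) * G :=
    calc ∑ m ∈ s, f m * g (N - m) ≤ ∑ m ∈ s, A * (t * N) ^ (-β) * g (N - m) :=
          sum_le_sum fun m hm => mul_le_mul_of_nonneg_right
            (le_mul_rpow_neg_of_le hβ hA hf (by positivity) (mem_filter.mp hm).2) (hg0 _)
      _ ≤ A * (t * N) ^ (-β) * ∑ m ∈ range (N + 1), g (N - m) := by
          rw [← mul_sum]
          exact mul_le_mul_of_nonneg_left (sum_le_sum_of_subset_of_nonneg (filter_subset _ _)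
            fun _ _ _ => hg0 _) (by positivity)
      _ ≤ A * (t * N) ^ (-β) * G := by
          have hreflect : ∑ m ∈ range (N + 1), g (N - m) = ∑ m ∈ range (N + 1), g m := by
            simpa using sum_range_reflect g (N + 1)
          rw [hreflect]
          exact mul_le_mul_of_nonneg_left (sum_le_hasSum _ (fun _ _ => hg0 _) hG) (by positivity)
  have hsmall : ∑ m ∈ (range (N + 1)).filter (fun m : ℕ => ¬ t * N ≤ m), f m * g (N - m) ≤
      F * (B * ((1 - t) * N) ^ (-β)) :=
    calc _ ≤ ∑ m ∈ (range (N + 1)).filter (fun m : ℕ => ¬ t * N ≤ m),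
            f m * (B * ((1 - t) * N) ^ (-β)) := by
          refine sum_le_sum fun m hm => mul_le_mul_of_nonneg_left ?_ (hf0 m)
          obtain ⟨hmr, hmt⟩ := mem_filter.mp hm
          have hmN : m ≤ N := Nat.lt_succ_iff.mp (mem_range.mp hmr)
          refine le_mul_rpow_neg_of_le hβ hB hg (by nlinarith) ?_
          rw [Nat.cast_sub hmN]
          linarith
      _ ≤ F * (B * ((1 - t) * N) ^ (-β)) := by
          rw [← sum_mul]
          exact mul_le_mul_of_nonneg_right (sum_le_hasSum _ (fun _ _ => hf0 _) hF)
            (by positivity)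
  rw [← sum_filter_add_sum_filter_not _ (fun m : ℕ => t * N ≤ m)]
  refine (add_le_add hbig hsmall).trans_eq ?_
  rw [Real.mul_rpow ht0.le hN0.le, Real.mul_rpow (by linarith) hN0.le]
  ring

end PowerLaw

/-- The factor `k ^ (1 + β)` is stable under the split `t = 1 / (k + 1)` of
`sum_range_mul_le_rpow`, which makes the induction close. -/
lemma convPow_le {K : ℕ → ℝ} {C β : ℝ} (hβ : 0 ≤ β) (hC : 0 ≤ C)
    (hK0 : ∀ n, 1 ≤ n → 0 ≤ K n) (hsum : HasSum (fun n => K (n + 1)) 1)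
    (hK : ∀ n, 1 ≤ n → K n ≤ C * n ^ (-β)) (k : ℕ) :
    ∀ n, 1 ≤ n → convPow K k n ≤ C * (k : ℝ) ^ (1 + β) * n ^ (-β) := by
  induction k with
  | zero =>
    intro n hn
    simp [convPow_zero, Nat.one_le_iff_ne_zero.mp hn, Real.zero_rpow (by linarith : 1 + β ≠ 0)]
  | succ k ih =>
    intro n hn
    rcases Nat.eq_zero_or_pos k with rfl | hk
    · simpa [convPow_one K hn] using hK n hn
    have hk0 : (0 : ℝ) < k := by exact_mod_cast hk
    have hbound := sum_range_mul_le_rpow (t := 1 / (k + 1)) hβ hC (by positivity)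
      (by positivity) (by rw [div_lt_one (by positivity)]; linarith)
      (update_zero_nonneg hK0) (convPow_nonneg hK0 k) (hasSum_update_zero hsum)
      (hasSum_convPow hsum k) (fun m hm => by rw [Function.update_of_ne (by omega)]; exact hK m hm)
      ih hn
    rw [← convPow_succ_eq_sum_range] at hbound
    refine hbound.trans_eq ?_
    have ht : (1 : ℝ) - 1 / (k + 1) = k / (k + 1) := by field_simp; ring
    have hk1 : (0 : ℝ) < k + 1 := by positivity
    rw [ht, Real.rpow_neg (by positivity), Real.rpow_neg (by positivity),
      Real.div_rpow zero_le_one hk1.le, Real.div_rpow hk0.le hk1.le, Real.one_rpow,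
      Real.rpow_add hk0, Real.rpow_one, Nat.cast_succ, Real.rpow_add hk1, Real.rpow_one]
    field_simp
    ring

lemma rpow_mul_mul_rpow_neg {x : ℝ} (hx : 0 < x) (β y : ℝ) : x ^ β * y * x ^ (-β) = y := by
  rw [Real.rpow_neg hx.le]
  field_simp [(Real.rpow_pos_of_pos hx β).ne']

section Asymptotics

variable {K : ℕ → ℝ} {β c : ℝ}

lemma exists_le_mul_rpow_neg (hlim : Tendsto (fun n : ℕ => (n : ℝ) ^ β * K n) atTop (𝓝 c)) :
    ∃ C, 0 ≤ C ∧ ∀ n, 1 ≤ n → K n ≤ C * n ^ (-β) := by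
  obtain ⟨C, hC⟩ := hlim.bddAbove_range
  refine ⟨max C 0, le_max_right _ _, fun n hn => ?_⟩
  rw [← rpow_mul_mul_rpow_neg (by exact_mod_cast hn : (0 : ℝ) < n) β (K n)]
  exact mul_le_mul_of_nonneg_right ((hC (Set.mem_range_self n)).trans (le_max_left _ _))
    (Real.rpow_nonneg (Nat.cast_nonneg n) _)

lemma eventually_half_mul_rpow_neg_le (hc : 0 < c)
    (hlim : Tendsto (fun n : ℕ => (n : ℝ) ^ β * K n) atTop (𝓝 c)) :
    ∀ᶠ n : ℕ in atTop, c / 2 * (n : ℝ) ^ (-β) ≤ K n := by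
  filter_upwards [hlim.eventually (eventually_gt_nhds (half_lt_self hc)),
    eventually_ge_atTop 1] with n hcn hn
  rw [← rpow_mul_mul_rpow_neg (by exact_mod_cast hn : (0 : ℝ) < n) β (K n)]
  exact mul_le_mul_of_nonneg_right hcn.le (Real.rpow_nonneg (Nat.cast_nonneg n) _)

lemma eventually_apply_pos (hc : 0 < c)
    (hlim : Tendsto (fun n : ℕ => (n : ℝ) ^ β * K n) atTop (𝓝 c)) :
    ∀ᶠ n in atTop, 0 < K n := by
  filter_upwards [eventually_half_mul_rpow_neg_le hc hlim, eventually_ge_atTop 1] with n hK hn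
  exact lt_of_lt_of_le (by positivity) hK

lemma tendsto_apply_sub_div_apply (hc : c ≠ 0)
    (hlim : Tendsto (fun n : ℕ => (n : ℝ) ^ β * K n) atTop (𝓝 c)) (m : ℕ) :
    Tendsto (fun N => K (N - m) / K N) atTop (𝓝 1) := by
  rw [← tendsto_add_atTop_iff_nat m]
  simp only [add_tsub_cancel_right]
  have hpow : Tendsto (fun n : ℕ => ((n : ℝ) / (n + m)) ^ (-β)) atTop (𝓝 1) := by
    simpa using (tendsto_natCast_div_add_atTop (m : ℝ)).rpow_const (Or.inl one_ne_zero)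
  have := (hlim.div (hlim.comp (tendsto_add_atTop_nat m)) hc).mul hpow
  rw [div_self hc, one_mul] at this
  refine this.congr' ?_
  filter_upwards [eventually_ge_atTop 1] with n hn
  have hn0 : (0 : ℝ) < n := by exact_mod_cast hn
  simp only [Pi.div_apply, Function.comp_apply, Nat.cast_add]
  have hnm : (0 : ℝ) < n + m := by positivity
  rw [Real.div_rpow hn0.le hnm.le, Real.rpow_neg hn0.le, Real.rpow_neg hnm.le]
  field_simp [(Real.rpow_pos_of_pos hn0 β).ne', (Real.rpow_pos_of_pos hnm β).ne']

lemma tendsto_apply_sub_div {g : ℕ → ℝ} {L : ℝ} (hc : 0 < c)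
    (hlim : Tendsto (fun n : ℕ => (n : ℝ) ^ β * K n) atTop (𝓝 c))
    (hg : Tendsto (fun N => g N / K N) atTop (𝓝 L)) (m : ℕ) :
    Tendsto (fun N => g (N - m) / K N) atTop (𝓝 L) := by
  have := (hg.comp (tendsto_sub_atTop_nat m)).mul (tendsto_apply_sub_div_apply hc.ne' hlim m)
  rw [mul_one] at this
  refine this.congr' ?_
  filter_upwards [tendsto_sub_atTop_nat m |>.eventually (eventually_apply_pos hc hlim)] with N hN
  exact div_mul_div_cancel₀ hN.ne'

lemma eventually_abs_div_le {g : ℕ → ℝ} {A : ℝ} (hβ : 0 ≤ β) (hc : 0 < c) (hA : 0 ≤ A)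
    (hg0 : ∀ n, 0 ≤ g n) (hg : ∀ n, 1 ≤ n → g n ≤ A * n ^ (-β))
    (hK : ∀ᶠ n : ℕ in atTop, c * (n : ℝ) ^ (-β) ≤ K n) :
    ∀ᶠ N in atTop, ∀ m ≤ N / 2, |g (N - m) / K N| ≤ A * 2 ^ β / c := by
  filter_upwards [hK, eventually_ge_atTop 1] with N hKN hN m hm
  have hN0 : (0 : ℝ) < N := by exact_mod_cast hN
  have hKpos : 0 < K N := (by positivity : 0 < c * (N : ℝ) ^ (-β)).trans_le hKN
  have hhalf : (N : ℝ) / 2 ≤ (N - m : ℕ) := by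
    have h2m : 2 * (m : ℝ) ≤ N := by exact_mod_cast (by omega : 2 * m ≤ N)
    rw [Nat.cast_sub (by omega)]
    linarith
  have hgN : g (N - m) ≤ A * 2 ^ β * (N : ℝ) ^ (-β) := by
    refine (le_mul_rpow_neg_of_le hβ hA hg (by positivity) hhalf).trans_eq ?_
    rw [Real.div_rpow hN0.le zero_le_two, Real.rpow_neg zero_le_two, div_eq_mul_inv, inv_inv]
    ring
  rw [abs_of_nonneg (div_nonneg (hg0 _) hKpos.le), div_le_div_iff₀ hKpos hc]
  calc g (N - m) * c ≤ A * 2 ^ β * (N : ℝ) ^ (-β) * c := by gcongr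
    _ ≤ A * 2 ^ β * K N := by
      rw [mul_assoc, mul_comm _ c]
      exact mul_le_mul_of_nonneg_left hKN (by positivity)

end Asymptotics

lemma tendsto_sum_range_mul_of_bounded {f : ℕ → ℝ} {u : ℕ → ℕ → ℝ} {n : ℕ → ℕ} {F L B : ℝ}
    (hf0 : ∀ m, 0 ≤ f m) (hf : HasSum f F) (hn : Tendsto n atTop atTop)
    (hu : ∀ m, Tendsto (u · m) atTop (𝓝 L)) (hB : ∀ᶠ N in atTop, ∀ m < n N, |u N m| ≤ B) :
    Tendsto (fun N => ∑ m ∈ range (n N), f m * u N m) atTop (𝓝 (F * L)) := by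
  have htsum : ∀ N, ∑ m ∈ range (n N), f m * u N m = ∑' m, if m < n N then f m * u N m else 0 :=
    fun N => by
      rw [tsum_eq_sum (s := range (n N)) fun m hm => if_neg (by simpa using hm)]
      exact sum_congr rfl fun m hm => (if_pos (mem_range.mp hm)).symm
  simp only [htsum, ← (hf.mul_right L).tsum_eq]
  refine tendsto_tsum_of_dominated_convergence (hf.summable.mul_right B) (fun m => ?_) ?_
  · refine ((hu m).const_mul (f m)).congr' ?_
    filter_upwards [hn.eventually_gt_atTop m] with N hN
    rw [if_pos hN]
  · filter_upwards [hB, hn.eventually_gt_atTop 0] with N hN hN0 m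
    split_ifs with hm
    · rw [norm_mul, Real.norm_of_nonneg (hf0 m)]
      exact mul_le_mul_of_nonneg_left (hN m hm) (hf0 m)
    · rw [norm_zero]
      exact mul_nonneg (hf0 m) ((abs_nonneg _).trans (hN 0 hN0))

lemma sum_range_mul_sub_split {a b : ℕ → ℝ} {j N : ℕ} (hj : j ≤ N + 1) :
    ∑ m ∈ range (N + 1), a m * b (N - m) =
      ∑ m ∈ range j, a m * b (N - m) + ∑ m ∈ range (N + 1 - j), b m * a (N - m) := by
  rw [← sum_range_add_sum_Ico _ hj]
  congr 1
  refine sum_nbij' (fun m => N - m) (fun m => N - m) ?_ ?_ ?_ ?_ ?_ <;>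
    intro m hm <;> simp only [mem_Ico, mem_range] at hm ⊢
  · omega
  · omega
  · omega
  · omega
  · rw [Nat.sub_sub_self (by omega), mul_comm]

/-- One big jump: split off the first jump `m` at `N / 2`. If `m ≤ N / 2`, the other `k` jumps
carry `K^{*k}(N - m) ~ k K(N)`; otherwise `K(m) ~ K(N)` and the other jumps sum to `N - m`,
whose law `K^{*k}` has total mass `1`. -/
lemma tendsto_convPow_div {K : ℕ → ℝ} {β c : ℝ} (hβ : 0 ≤ β) (hc : 0 < c)
    (hK0 : ∀ n, 1 ≤ n → 0 ≤ K n) (hsum : HasSum (fun n => K (n + 1)) 1)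
    (hlim : Tendsto (fun n : ℕ => (n : ℝ) ^ β * K n) atTop (𝓝 c)) (k : ℕ) :
    Tendsto (fun N => convPow K k N / K N) atTop (𝓝 k) := by
  obtain ⟨C, hC, hKC⟩ := exists_le_mul_rpow_neg hlim
  have hlow := eventually_half_mul_rpow_neg_le hc hlim
  set K₀ := Function.update K 0 0
  have hK₀ : ∀ n, 1 ≤ n → K₀ n = K n := fun n hn => Function.update_of_ne (by omega) _ _
  have hK₀K : Tendsto (fun N => K₀ N / K N) atTop (𝓝 1) := by
    refine tendsto_const_nhds.congr' ?_
    filter_upwards [eventually_ge_atTop 1, eventually_apply_pos hc hlim] with N hN hKN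
    rw [hK₀ N hN, div_self hKN.ne']
  induction k with
  | zero =>
    refine tendsto_const_nhds.congr' ?_
    filter_upwards [eventually_ge_atTop 1] with N hN
    simp [convPow_zero, Nat.one_le_iff_ne_zero.mp hN]
  | succ k ih =>
    have hsplit : ∀ N, convPow K (k + 1) N / K N =
        ∑ m ∈ range (N / 2 + 1), K₀ m * (convPow K k (N - m) / K N) +
          ∑ m ∈ range (N - N / 2), convPow K k m * (K₀ (N - m) / K N) := fun N => by
      rw [convPow_succ_eq_sum_range, sum_range_mul_sub_split (j := N / 2 + 1) (by omega),
        add_div, sum_div, sum_div, show N + 1 - (N / 2 + 1) = N - N / 2 by omega]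
      simp only [mul_div_assoc]
      rfl
    have hsmallJump := tendsto_sum_range_mul_of_bounded (update_zero_nonneg hK0)
      (hasSum_update_zero hsum)
      (tendsto_atTop_mono (fun N => (N / 2).le_succ) (Nat.tendsto_div_const_atTop two_ne_zero))
      (tendsto_apply_sub_div hc hlim ih)
      ((eventually_abs_div_le hβ (half_pos hc) (by positivity) (convPow_nonneg hK0 k)
        (convPow_le hβ hC hK0 hsum hKC k) hlow).mono fun N hN m hm => hN m (by omega))
    have hbigJump := tendsto_sum_range_mul_of_bounded (convPow_nonneg hK0 k) (hasSum_convPow hsum k)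
      (tendsto_atTop_mono (fun N => (by omega : N / 2 ≤ N - N / 2))
        (Nat.tendsto_div_const_atTop two_ne_zero))
      (tendsto_apply_sub_div hc hlim hK₀K)
      ((eventually_abs_div_le hβ (half_pos hc) hC (update_zero_nonneg hK0)
        (fun n hn => (hK₀ n hn).trans_le (hKC n hn)) hlow).mono fun N hN m hm => hN m (by omega))
    simp only [hsplit, Nat.cast_succ]
    simpa using hsmallJump.add hbigJump

lemma tendstoUniformlyOn_of_hasSum_pow {X : Type*} {F : ℕ → X → ℂ} {f : X → ℂ} {z : X → ℂ}
    {s : Set X} {a : ℕ → ℕ → ℝ} {b bound : ℕ → ℝ} {q : ℝ} (hq : 0 ≤ q)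
    (hz : ∀ x ∈ s, ‖z x‖ ≤ q)
    (hF : ∀ᶠ N in atTop, ∀ x ∈ s, HasSum (fun k => (a N k : ℂ) * z x ^ k) (F N x))
    (hf : ∀ x ∈ s, HasSum (fun k => (b k : ℂ) * z x ^ k) (f x))
    (hlim : ∀ k, Tendsto (a · k) atTop (𝓝 (b k)))
    (hbound : ∀ᶠ N in atTop, ∀ k, |a N k - b k| ≤ bound k)
    (hsum : Summable fun k => bound k * q ^ k) :
    TendstoUniformlyOn F f atTop s := by
  have herr : Tendsto (fun N => ∑' k, |a N k - b k| * q ^ k) atTop (𝓝 0) := by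
    have := tendsto_tsum_of_dominated_convergence hsum
      (fun k => (((hlim k).sub_const (b k)).abs.mul_const (q ^ k)))
      (hbound.mono fun N hN k => by
        rw [Real.norm_of_nonneg (by positivity)]
        exact mul_le_mul_of_nonneg_right (hN k) (by positivity))
    simpa using this
  rw [Metric.tendstoUniformlyOn_iff]
  intro δ hδ
  filter_upwards [hF, hbound, herr.eventually (gt_mem_nhds hδ)] with N hFN hN hNδ x hx
  have hsummable : Summable fun k => |a N k - b k| * q ^ k :=
    hsum.of_nonneg_of_le (fun k => by positivity)
      (fun k => mul_le_mul_of_nonneg_right (hN k) (by positivity))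
  refine lt_of_le_of_lt ?_ hNδ
  rw [dist_eq_norm, norm_sub_rev]
  refine ((hFN x hx).sub (hf x hx)).norm_le_of_bounded hsummable.hasSum fun k => ?_
  rw [← sub_mul, ← Complex.ofReal_sub, norm_mul, norm_pow, Complex.norm_real, Real.norm_eq_abs]
  exact mul_le_mul_of_nonneg_left (pow_le_pow_left₀ (norm_nonneg _) (hz x hx) k) (abs_nonneg _)

lemma hasSum_pinZ_div (K : ℕ → ℝ) {N : ℕ} (hN : 1 ≤ N) (h : ℂ) :
    HasSum (fun k => ((convPow K k N / K N : ℝ) : ℂ) * Complex.exp h ^ k) (pinZ K N h / K N) := by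
  have hfinite : pinZ K N h / K N =
      ∑ k ∈ Icc 1 N, ((convPow K k N / K N : ℝ) : ℂ) * Complex.exp h ^ k := by
    rw [pinZ_eq_sum_convPow, sum_div]
    exact sum_congr rfl fun k _ => by push_cast; ring
  rw [hfinite]
  refine hasSum_sum_of_ne_finset_zero fun k hk => ?_
  rcases Nat.eq_zero_or_pos k with rfl | hk0
  · simp [convPow_zero, Nat.one_le_iff_ne_zero.mp hN]
  · rw [convPow_eq_zero_of_lt K (by simp at hk; omega)]
    simp

lemma eventually_abs_convPow_div_sub_le {K : ℕ → ℝ} {β c : ℝ} (hβ : 0 ≤ β) (hβ2 : β ≤ 2)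
    (hc : 0 < c) (hK0 : ∀ n, 1 ≤ n → 0 ≤ K n) (hsum : HasSum (fun n => K (n + 1)) 1)
    (hlim : Tendsto (fun n : ℕ => (n : ℝ) ^ β * K n) atTop (𝓝 c)) :
    ∃ M, ∀ᶠ N in atTop, ∀ k : ℕ, |convPow K k N / K N - k| ≤ M * k ^ 3 + k := by
  obtain ⟨C, hC, hKC⟩ := exists_le_mul_rpow_neg hlim
  refine ⟨C / (c / 2), ?_⟩
  filter_upwards [eventually_half_mul_rpow_neg_le hc hlim, eventually_ge_atTop 1] with N hKN hN k
  have hKpos : 0 < K N := (by positivity : 0 < c / 2 * (N : ℝ) ^ (-β)).trans_le hKN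
  have hpow : (k : ℝ) ^ (1 + β) ≤ (k : ℝ) ^ 3 := by
    rcases Nat.eq_zero_or_pos k with rfl | hk
    · simp [Real.zero_rpow (by linarith : 1 + β ≠ 0)]
    · rw [← Real.rpow_natCast]
      exact Real.rpow_le_rpow_of_exponent_le (by exact_mod_cast hk) (by push_cast; linarith)
  have hratio : convPow K k N / K N ≤ C / (c / 2) * k ^ 3 := by
    rw [div_le_iff₀ hKpos]
    calc convPow K k N ≤ C * k ^ (1 + β) * (N : ℝ) ^ (-β) := convPow_le hβ hC hK0 hsum hKC k N hN
      _ ≤ C / (c / 2) * k ^ 3 * (c / 2 * (N : ℝ) ^ (-β)) := by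
        rw [show C / (c / 2) * k ^ 3 * (c / 2 * (N : ℝ) ^ (-β)) = C * k ^ 3 * (N : ℝ) ^ (-β) by
          field_simp]
        gcongr
      _ ≤ C / (c / 2) * k ^ 3 * K N := by gcongr
  calc |convPow K k N / K N - k| ≤ |convPow K k N / K N| + |(k : ℝ)| := abs_sub _ _
    _ ≤ C / (c / 2) * k ^ 3 + k := by
      rw [abs_of_nonneg (div_nonneg (convPow_nonneg hK0 k N) hKpos.le), Nat.abs_cast]
      linarith

lemma tendstoUniformlyOn_pinZ_div {K : ℕ → ℝ} {β c ε : ℝ} (hβ : 0 ≤ β) (hβ2 : β ≤ 2)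
    (hc : 0 < c) (hK0 : ∀ n, 1 ≤ n → 0 ≤ K n) (hsum : HasSum (fun n => K (n + 1)) 1)
    (hlim : Tendsto (fun n : ℕ => (n : ℝ) ^ β * K n) atTop (𝓝 c)) (hε : 0 < ε) :
    TendstoUniformlyOn (fun N h => pinZ K N h / K N)
      (fun h => Complex.exp h / (1 - Complex.exp h) ^ 2) atTop {h : ℂ | h.re ≤ -ε} := by
  obtain ⟨M, hM⟩ := eventually_abs_convPow_div_sub_le hβ hβ2 hc hK0 hsum hlim
  have hq : ‖Real.exp (-ε)‖ < 1 := by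
    rw [Real.norm_of_nonneg (Real.exp_nonneg _), Real.exp_lt_one_iff]
    linarith
  have hz : ∀ h ∈ {h : ℂ | h.re ≤ -ε}, ‖Complex.exp h‖ ≤ Real.exp (-ε) := fun h hh => by
    rw [Complex.norm_exp]
    exact Real.exp_le_exp.mpr hh
  have hsummable : Summable fun k : ℕ => (M * k ^ 3 + k) * Real.exp (-ε) ^ k := by
    have h3 := (summable_pow_mul_geometric_of_norm_lt_one 3 hq).mul_left M
    have h1 := summable_pow_mul_geometric_of_norm_lt_one 1 hq
    simpa only [pow_one, add_mul, mul_assoc] using h3.add h1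
  refine tendstoUniformlyOn_of_hasSum_pow (Real.exp_nonneg _) hz
    ((eventually_ge_atTop 1).mono fun N hN h _ => hasSum_pinZ_div K hN h)
    (fun h hh => ?_) (tendsto_convPow_div hβ hc hK0 hsum hlim) hM hsummable
  simpa using hasSum_coe_mul_geometric_of_norm_lt_one
    ((hz h hh).trans_lt ((Real.le_norm_self _).trans_lt hq))

end Pinning

open Pinning

theorem stmt5 (α : ℝ) (hα : α ∈ Set.Ioo (0 : ℝ) 1) (K : ℕ → ℝ)
    (hK : IsInterArrivalLaw α K) :
    (∀ ε : ℝ, 0 < ε →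
      TendstoUniformlyOn (fun (N : ℕ) (h : ℂ) => pinZ K N h / (K N : ℂ))
        (fun h : ℂ => Complex.exp h / (1 - Complex.exp h) ^ 2)
        atTop {h : ℂ | h.re ≤ -ε}) ∧
    (∀ h : ℂ, h.re < 0 →
      Tendsto (fun N : ℕ => pinZ K N h / (K N : ℂ)) atTop
        (nhds (Complex.exp h / (1 - Complex.exp h) ^ 2))) := by
  obtain ⟨hα0, hα1⟩ := hα
  obtain ⟨hK0, -, hsum, c, hc, hlim⟩ := hK
  have huniform := fun ε (hε : 0 < ε) =>
    tendstoUniformlyOn_pinZ_div (by linarith) (by linarith) hc hK0 hsum hlim hε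
  exact ⟨huniform, fun h hh => (huniform (-h.re) (by linarith)).tendsto_at (neg_neg h.re).ge⟩
end

section
/- Let α ∈ (0,1) and let K be a general inter-arrival law with exponent α, with partition function Z_{N,h}, and let K̂(z) := ∑_{j=1}^∞ K(j)·z^j (a power series with radius of convergence at least 1). Then there exist C > 0 and r ∈ (0,1) such that: (a) for every h ∈ ℂ with Re h ≥ C there is a unique z_h ∈ ℂ with |z_h| < r and K̂(z_h) = e^{−h}; (b) for such h the derivative K̂'(z_h) is nonzero; and (c) Z_{N,h}·e^{h}·K̂'(z_h)·z_h^{N+1} → 1 as N → ∞, uniformly over {h ∈ ℂ : Re h ≥ C}. -/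
open Filter

/-- The z-transform `K̂(z) = ∑_{j≥1} K(j) z^j` of the inter-arrival law. -/
noncomputable def Khat (K : ℕ → ℝ) (z : ℂ) : ℂ :=
  ∑' j : ℕ, (K (j + 1) : ℂ) * z ^ (j + 1)

/-!
For large `Re h` the equation `K̂(z) = e^{-h}` has a unique small root `z_h ≈ e^{-h} / K 1`: on a
disc around `0`, `K̂` is a small perturbation of `z ↦ K 1 * z` (its derivative stays within `4 |z|`
of `K 1`), so the quantitative inverse function theorem applies. Splitting off the first excursion,
`u N = Z_{N,h} z_h ^ N` is a renewal sequence, `u (N + 1) = ∑_{i ≤ N} q i * u (N - i)` with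
`q i = e^h K (i + 1) z_h ^ (i + 1)`, `∑ q = e^h K̂(z_h) = 1`, and `q i` geometrically small. The
renewal theorem with exponentially small tails gives
`u N → 1 / ∑ (i + 1) q i = 1 / (e^h z_h K̂'(z_h))` at a geometric rate depending only on `K 1`,
hence uniformly in `h`.
-/

open Finset Metric Set Topology

noncomputable def compositionWeight (K : ℕ → ℝ) (k N : ℕ) : ℂ :=
  ∑ ℓ ∈ (Finset.Nat.antidiagonalTuple k N).filter (fun ℓ => ∀ i, 1 ≤ ℓ i), ∏ i, (K (ℓ i) : ℂ)

/-- `pinZ` including the `k = 0` term, i.e. with the convention `Z_{0,h} = 1`. -/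
noncomputable def pinZExt (K : ℕ → ℝ) (N : ℕ) (h : ℂ) : ℂ :=
  ∑ k ∈ range (N + 1), Complex.exp (k * h) * compositionWeight K k N

section Compositions

variable (K : ℕ → ℝ) (h : ℂ)

lemma compositionWeight_zero_zero : compositionWeight K 0 0 = 1 := by
  simp [compositionWeight]

lemma compositionWeight_zero_succ (N : ℕ) : compositionWeight K 0 (N + 1) = 0 := by
  simp [compositionWeight]

lemma compositionWeight_eq_zero_of_lt {k N : ℕ} (h : N < k) : compositionWeight K k N = 0 := by
  refine sum_eq_zero fun ℓ hℓ => absurd h (not_lt.2 ?_)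
  simp only [mem_filter, Nat.mem_antidiagonalTuple] at hℓ
  calc k = ∑ _i : Fin k, 1 := by simp
    _ ≤ ∑ i, ℓ i := sum_le_sum fun i _ => hℓ.2 i
    _ = N := hℓ.1

lemma compositionWeight_succ_succ (k N : ℕ) :
    compositionWeight K (k + 1) (N + 1) =
      ∑ p ∈ antidiagonal N, (K (p.1 + 1) : ℂ) * compositionWeight K k p.2 := by
  simp only [compositionWeight, mul_sum]
  rw [sum_sigma']
  refine sum_nbij' (fun ℓ => ⟨(ℓ 0 - 1, N + 1 - ℓ 0), Fin.tail ℓ⟩)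
    (fun p => Fin.cons (p.1.1 + 1) p.2) ?_ ?_ ?_ ?_ ?_
  · intro ℓ hℓ
    simp only [mem_filter, Nat.mem_antidiagonalTuple, Fin.sum_univ_succ] at hℓ
    have := hℓ.2 0
    simp only [mem_sigma, HasAntidiagonal.mem_antidiagonal, mem_filter, Nat.mem_antidiagonalTuple]
    exact ⟨by omega, by simp only [Fin.tail]; omega, fun i => hℓ.2 i.succ⟩
  · rintro ⟨p, ℓ⟩ hpℓ
    simp only [mem_sigma, HasAntidiagonal.mem_antidiagonal, mem_filter,
      Nat.mem_antidiagonalTuple] at hpℓ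
    simp only [mem_filter, Nat.mem_antidiagonalTuple, Fin.sum_univ_succ, Fin.cons_zero,
      Fin.cons_succ]
    exact ⟨by omega, Fin.cases (by simp) fun i => by simpa using hpℓ.2.2 i⟩
  · intro ℓ hℓ
    simp only [mem_filter] at hℓ
    simp [Nat.sub_add_cancel (hℓ.2 0)]
  · rintro ⟨p, ℓ⟩ hpℓ
    simp only [mem_sigma, HasAntidiagonal.mem_antidiagonal] at hpℓ
    simp only [Fin.cons_zero, Fin.tail_cons, add_tsub_cancel_right, Sigma.mk.injEq, heq_eq_eq,
      and_true]
    ext <;> simp; omega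
  · intro ℓ hℓ
    simp only [mem_filter] at hℓ
    simp [Fin.prod_univ_succ, Nat.sub_add_cancel (hℓ.2 0), Fin.tail]

lemma pinZExt_zero : pinZExt K 0 h = 1 := by
  simp [pinZExt, compositionWeight_zero_zero]

lemma pinZExt_eq_pinZ {N : ℕ} (hN : N ≠ 0) : pinZExt K N h = pinZ K N h := by
  obtain ⟨N, rfl⟩ := Nat.exists_eq_succ_of_ne_zero hN
  rw [pinZExt, sum_range_succ', compositionWeight_zero_succ, mul_zero, add_zero, pinZ,
    ← Finset.Ico_add_one_right_eq_Icc, sum_Ico_eq_sum_range, Nat.add_sub_cancel]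
  refine sum_congr rfl fun k _ => ?_
  rw [add_comm 1 k, compositionWeight]

lemma pinZExt_eq_sum_range {N M : ℕ} (hNM : N < M) :
    pinZExt K N h = ∑ k ∈ range M, Complex.exp (k * h) * compositionWeight K k N := by
  refine sum_subset (range_subset_range.2 hNM) fun k _ hkN => ?_
  rw [compositionWeight_eq_zero_of_lt K (by simpa using hkN), mul_zero]

lemma pinZExt_succ (N : ℕ) :
    pinZExt K (N + 1) h =
      ∑ p ∈ antidiagonal N, Complex.exp h * K (p.1 + 1) * pinZExt K p.2 h := by
  rw [pinZExt, sum_range_succ', compositionWeight_zero_succ, mul_zero, add_zero]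
  simp only [compositionWeight_succ_succ, mul_sum]
  rw [sum_comm]
  refine sum_congr rfl fun p hp => ?_
  rw [HasAntidiagonal.mem_antidiagonal] at hp
  rw [pinZExt_eq_sum_range K h (M := N + 1) (by omega), mul_sum]
  refine sum_congr rfl fun k _ => ?_
  push_cast
  rw [add_mul, one_mul, Complex.exp_add]
  ring

end Compositions

section Renewal

variable {q u t : ℕ → ℂ}

lemma sum_antidiagonal_mul_tail_eq_one (hu0 : u 0 = 1)
    (hu : ∀ N, u (N + 1) = ∑ p ∈ antidiagonal N, q p.1 * u p.2) (N : ℕ) :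
    ∑ p ∈ antidiagonal N, u p.1 * (1 - ∑ i ∈ range p.2, q i) = 1 := by
  induction N with
  | zero => simp [hu0]
  | succ N ih =>
    have hsplit : ∑ p ∈ antidiagonal N, u p.1 * (1 - ∑ i ∈ range (p.2 + 1), q i) =
        ∑ p ∈ antidiagonal N, u p.1 * (1 - ∑ i ∈ range p.2, q i) -
          ∑ p ∈ antidiagonal N, q p.1 * u p.2 := by
      rw [← Nat.sum_antidiagonal_swap (f := fun p => q p.1 * u p.2), ← sum_sub_distrib]
      refine sum_congr rfl fun p _ => ?_
      simp only [sum_range_succ, Prod.fst_swap, Prod.snd_swap]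
      ring
    rw [Nat.sum_antidiagonal_succ', hsplit, ih, ← hu N]
    simp

lemma sum_antidiagonal_mul_sub_one {μ : ℂ} (hut : ∀ N, ∑ p ∈ antidiagonal N, u p.1 * t p.2 = 1)
    (N : ℕ) :
    ∑ p ∈ antidiagonal N, t p.1 * (u p.2 * μ - 1) = μ - ∑ m ∈ range (N + 1), t m := by
  simp only [mul_sub, mul_one, sum_sub_distrib, ← mul_assoc, ← sum_mul]
  rw [← Nat.sum_antidiagonal_swap]
  simp only [Prod.fst_swap, Prod.snd_swap, mul_comm (t _), hut, one_mul]
  rw [Nat.sum_antidiagonal_eq_sum_range_succ (fun i _ => t i)]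

lemma norm_sub_sum_range_le {μ : ℂ} {D r : ℝ} (hr0 : 0 ≤ r) (hr : r ≤ 1 / 2)
    (ht : ∀ m, ‖t m‖ ≤ D * r ^ m) (hμ : HasSum t μ) (n : ℕ) :
    ‖μ - ∑ m ∈ range n, t m‖ ≤ 2 * D * r ^ n := by
  have hD : 0 ≤ D := by simpa using (norm_nonneg _).trans (ht 0)
  rw [norm_sub_rev]
  refine (norm_sub_le_of_geometric_bound_of_hasSum (by linarith) ht hμ n).trans ?_
  rw [div_le_iff₀ (by linarith)]
  nlinarith [mul_nonneg (mul_nonneg hD (pow_nonneg hr0 n)) (by linarith : 0 ≤ 1 - 2 * r)]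

lemma norm_sum_antidiagonal_mul_le {w : ℕ → ℂ} {D σ : ℝ} (hσ0 : 0 ≤ σ) (hσ : σ ≤ 1 / 2)
    (ht : ∀ m, ‖t m‖ ≤ D * (σ ^ 2) ^ m) {N : ℕ} (hw : ∀ n ≤ N, ‖w n‖ ≤ σ ^ n) :
    ‖∑ p ∈ antidiagonal N, t (p.1 + 1) * w p.2‖ ≤ 2 * D * σ * σ ^ (N + 1) := by
  have hD : 0 ≤ D := by simpa using (norm_nonneg _).trans (ht 0)
  have hgeom : ∑ k ∈ range (N + 1), σ ^ k ≤ 2 := by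
    have h := geom_sum_Ico_le_of_lt_one (m := 0) (n := N + 1) hσ0 (by linarith)
    rw [← range_eq_Ico, pow_zero] at h
    exact h.trans (by rw [div_le_iff₀ (by linarith)]; linarith)
  calc ‖∑ p ∈ antidiagonal N, t (p.1 + 1) * w p.2‖
      ≤ ∑ p ∈ antidiagonal N, D * σ ^ (N + 1) * σ ^ (p.1 + 1) := by
        refine norm_sum_le_of_le _ fun p hp => ?_
        rw [HasAntidiagonal.mem_antidiagonal] at hp
        rw [norm_mul]
        calc ‖t (p.1 + 1)‖ * ‖w p.2‖ ≤ D * (σ ^ 2) ^ (p.1 + 1) * σ ^ p.2 :=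
              mul_le_mul (ht _) (hw _ (by omega)) (norm_nonneg _) (by positivity)
          _ = D * σ ^ (N + 1) * σ ^ (p.1 + 1) := by
              rw [← pow_mul, mul_assoc, mul_assoc, ← pow_add, ← pow_add]
              congr 2
              omega
    _ = D * σ ^ (N + 1) * σ * ∑ k ∈ range (N + 1), σ ^ k := by
        rw [Nat.sum_antidiagonal_eq_sum_range_succ (fun k _ => D * σ ^ (N + 1) * σ ^ (k + 1)),
          mul_sum]
        simp only [pow_succ', mul_assoc]
    _ ≤ 2 * D * σ * σ ^ (N + 1) := by
        nlinarith [mul_nonneg (mul_nonneg hD (pow_nonneg hσ0 (N + 1))) hσ0]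

/-- With `w n = u n * μ - 1`, the identity `u ⋆ t = 1` becomes
`w (N + 1) = (μ - ∑_{m ≤ N + 1} t m) - ∑_{m ≥ 1} t m * w (N + 1 - m)`, whose right side is
small by strong induction. -/
lemma norm_mul_sub_one_le_of_sum_antidiagonal_eq_one {μ : ℂ} {D σ : ℝ} (hσ0 : 0 < σ)
    (hσ : σ ≤ 1 / 2) (hDσ : 6 * D * σ ≤ 1) (ht0 : t 0 = 1) (ht : ∀ m, ‖t m‖ ≤ D * (σ ^ 2) ^ m)
    (hμ : HasSum t μ) (hut : ∀ N, ∑ p ∈ antidiagonal N, u p.1 * t p.2 = 1) (N : ℕ) :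
    ‖u N * μ - 1‖ ≤ σ ^ N := by
  have hD : 0 ≤ D := by simpa using (norm_nonneg _).trans (ht 0)
  have htail := norm_sub_sum_range_le (sq_nonneg σ) (by nlinarith) ht hμ
  induction N using Nat.strong_induction_on with
  | _ N ih =>
  rcases N with _ | N
  · have h0 := sum_antidiagonal_mul_sub_one (μ := μ) hut 0
    simp only [Nat.antidiagonal_zero, sum_singleton, ht0, one_mul] at h0
    rw [h0, pow_zero]
    nlinarith [htail 1]
  · have h := sum_antidiagonal_mul_sub_one (μ := μ) hut (N + 1)
    rw [Nat.sum_antidiagonal_succ, ht0, one_mul, ← eq_sub_iff_add_eq] at h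
    have hrest := norm_sum_antidiagonal_mul_le (w := fun n => u n * μ - 1) hσ0.le hσ ht
      fun n hn => ih n (Nat.lt_succ_of_le hn)
    have hfirst : 2 * D * (σ ^ 2) ^ (N + 1 + 1) ≤ 2 * D * σ * σ ^ (N + 1) := by
      calc 2 * D * (σ ^ 2) ^ (N + 1 + 1) = 2 * D * σ * σ ^ (N + 1) * σ ^ (N + 2) := by ring
        _ ≤ 2 * D * σ * σ ^ (N + 1) :=
          mul_le_of_le_one_right (by positivity) (pow_le_one₀ hσ0.le (by linarith))
    rw [h]
    refine (norm_sub_le _ _).trans ((add_le_add (htail _) hrest).trans ?_)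
    nlinarith [pow_pos hσ0 (N + 1)]

lemma hasSum_one_sub_sum_range {μ : ℂ} {C r : ℝ} (hr0 : 0 ≤ r) (hr : r < 1)
    (ht : ∀ m, ‖1 - ∑ i ∈ range m, q i‖ ≤ C * r ^ m)
    (hμ : HasSum (fun i : ℕ => (i + 1) * q i) μ) :
    HasSum (fun m => 1 - ∑ i ∈ range m, q i) μ := by
  set t : ℕ → ℂ := fun m => 1 - ∑ i ∈ range m, q i
  have hpartial : ∀ n, ∑ m ∈ range n, t m = n * t n + ∑ i ∈ range n, (i + 1) * q i := by
    intro n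
    induction n with
    | zero => simp
    | succ n ih =>
      simp only [sum_range_succ, ih, t]
      push_cast
      ring
  have hnt : Tendsto (fun n : ℕ => n * t n) atTop (𝓝 0) := by
    have hlim := (tendsto_self_mul_const_pow_of_lt_one hr0 hr).const_mul C
    rw [mul_zero] at hlim
    refine squeeze_zero_norm (fun n => ?_) hlim
    rw [norm_mul, Complex.norm_natCast]
    nlinarith [ht n, (n.cast_nonneg : (0 : ℝ) ≤ n)]
  have hsum : Summable t :=
    .of_norm_bounded ((summable_geometric_of_lt_one hr0 hr).mul_left C) ht
  rw [hsum.hasSum_iff_tendsto_nat]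
  simpa [hpartial] using hnt.add hμ.tendsto_sum_nat

theorem norm_mul_sub_one_le_of_renewal {μ : ℂ} {D σ : ℝ} (hσ0 : 0 < σ)
    (hσ : σ ≤ 1 / 2) (hDσ : 6 * D * σ ≤ 1) (hu0 : u 0 = 1)
    (hu : ∀ N, u (N + 1) = ∑ p ∈ antidiagonal N, q p.1 * u p.2)
    (ht : ∀ m, ‖1 - ∑ i ∈ range m, q i‖ ≤ D * (σ ^ 2) ^ m)
    (hμ : HasSum (fun i : ℕ => (i + 1) * q i) μ) (N : ℕ) :
    ‖u N * μ - 1‖ ≤ σ ^ N :=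
  norm_mul_sub_one_le_of_sum_antidiagonal_eq_one hσ0 hσ hDσ (by simp) ht
    (hasSum_one_sub_sum_range (sq_nonneg σ) (by nlinarith) ht hμ)
    (sum_antidiagonal_mul_tail_eq_one hu0 hu) N

end Renewal

section Transform

variable {K : ℕ → ℝ}

lemma hasSum_khat (hK : ∀ n, |K (n + 1)| ≤ 1) {z : ℂ} (hz : ‖z‖ < 1) :
    HasSum (fun j : ℕ => (K (j + 1) : ℂ) * z ^ (j + 1)) (Khat K z) := by
  refine Summable.hasSum (.of_norm_bounded (g := fun j => ‖z‖ ^ (j + 1))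
    ((summable_nat_add_iff 1).2 (summable_geometric_of_lt_one (norm_nonneg z) hz)) fun j => ?_)
  rw [norm_mul, norm_pow, Complex.norm_real, Real.norm_eq_abs]
  exact mul_le_of_le_one_left (by positivity) (hK j)

lemma differentiableAt_khat_and_hasSum_deriv (hK : ∀ n, |K (n + 1)| ≤ 1) {R : ℝ} (hR : R < 1)
    {z : ℂ} (hz : ‖z‖ < R) :
    DifferentiableAt ℂ (Khat K) z ∧
      HasSum (fun j : ℕ => (K (j + 1) : ℂ) * ((j + 1) * z ^ j)) (deriv (Khat K) z) := by
  set F : ℕ → ℂ → ℂ := fun j w => (K (j + 1) : ℂ) * w ^ (j + 1)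
  have hF : ∀ j, DifferentiableOn ℂ (F j) (ball 0 R) := fun j => by fun_prop
  have hR0 : 0 ≤ R := (norm_nonneg z).trans hz.le
  have hbound : ∀ j, ∀ w ∈ ball (0 : ℂ) R, ‖F j w‖ ≤ R ^ (j + 1) := by
    intro j w hw
    rw [mem_ball_zero_iff] at hw
    rw [norm_mul, norm_pow, Complex.norm_real, Real.norm_eq_abs]
    calc |K (j + 1)| * ‖w‖ ^ (j + 1) ≤ 1 * R ^ (j + 1) := by gcongr; exact hK j
      _ = R ^ (j + 1) := one_mul _
  have hsum : Summable fun j : ℕ => R ^ (j + 1) :=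
    (summable_nat_add_iff 1).2 (summable_geometric_of_lt_one hR0 hR)
  have hz' : z ∈ ball (0 : ℂ) R := mem_ball_zero_iff.2 hz
  refine ⟨(Complex.differentiableOn_tsum_of_summable_norm hsum hF isOpen_ball hbound
    |>.differentiableAt (isOpen_ball.mem_nhds hz')), ?_⟩
  refine (Complex.hasSum_deriv_of_summable_norm hsum hF isOpen_ball hbound hz').congr_fun
    fun j => ?_
  simp [F]

lemma differentiableAt_khat (hK : ∀ n, |K (n + 1)| ≤ 1) {z : ℂ} (hz : ‖z‖ < 1) :
    DifferentiableAt ℂ (Khat K) z :=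
  (differentiableAt_khat_and_hasSum_deriv hK (R := (‖z‖ + 1) / 2) (by linarith) (by linarith)).1

lemma hasSum_deriv_khat (hK : ∀ n, |K (n + 1)| ≤ 1) {z : ℂ} (hz : ‖z‖ < 1) :
    HasSum (fun j : ℕ => (K (j + 1) : ℂ) * ((j + 1) * z ^ j)) (deriv (Khat K) z) :=
  (differentiableAt_khat_and_hasSum_deriv hK (R := (‖z‖ + 1) / 2) (by linarith) (by linarith)).2

lemma norm_deriv_khat_sub_le (hK : ∀ n, |K (n + 1)| ≤ 1) {z : ℂ} (hz : ‖z‖ ≤ 1 / 4) :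
    ‖deriv (Khat K) z - K 1‖ ≤ 4 * ‖z‖ := by
  have hsum := (hasSum_nat_add_iff' 1).2 (hasSum_deriv_khat hK (by linarith))
  simp only [Finset.range_one, Finset.sum_singleton, zero_add, CharP.cast_eq_zero, pow_zero,
    mul_one] at hsum
  have hx : 2 * ‖z‖ < 1 := by linarith
  have hgeom := (hasSum_geometric_of_lt_one (by positivity) hx).mul_left (2 * ‖z‖)
  refine (hsum.norm_le_of_bounded hgeom fun j => ?_).trans ?_
  · rw [norm_mul, norm_mul, norm_pow, Complex.norm_real, Real.norm_eq_abs, mul_pow,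
      ← mul_assoc, pow_succ]
    push_cast
    have h2 : ‖((j : ℂ) + 1 + 1)‖ ≤ 2 ^ (j + 1) := by
      rw [show ((j : ℂ) + 1 + 1) = ((j + 2 : ℕ) : ℂ) by push_cast; ring, Complex.norm_natCast]
      exact_mod_cast Nat.lt_two_pow_self
    have hK' : |K (j + 1 + 1)| ≤ 1 := hK _
    calc |K (j + 1 + 1)| * ‖((j : ℂ) + 1 + 1)‖ * (‖z‖ ^ j * ‖z‖)
        ≤ 1 * 2 ^ (j + 1) * (‖z‖ ^ j * ‖z‖) := by gcongr
      _ = 2 * ‖z‖ * (2 ^ j * ‖z‖ ^ j) := by ring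
  · have : (1 - 2 * ‖z‖)⁻¹ ≤ 2 := by
      rw [inv_le_comm₀ (by linarith) two_pos]; linarith
    nlinarith [norm_nonneg z]

lemma deriv_khat_ne_zero (hK : ∀ n, |K (n + 1)| ≤ 1) {z : ℂ} (hz : ‖z‖ ≤ 1 / 4)
    (hzK : 4 * ‖z‖ < |K 1|) : deriv (Khat K) z ≠ 0 := by
  intro h0
  have h := norm_deriv_khat_sub_le hK hz
  rw [h0, zero_sub, norm_neg, Complex.norm_real, Real.norm_eq_abs] at h
  linarith

lemma norm_khat_sub_khat_sub_le (hK : ∀ n, |K (n + 1)| ≤ 1) {ρ : ℝ} (hρ : ρ ≤ 1 / 4) {z w : ℂ}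
    (hz : ‖z‖ ≤ ρ) (hw : ‖w‖ ≤ ρ) :
    ‖Khat K z - Khat K w - K 1 * (z - w)‖ ≤ 4 * ρ * ‖z - w‖ := by
  have hderiv : ∀ ζ ∈ closedBall (0 : ℂ) ρ,
      HasDerivAt (fun ζ => Khat K ζ - K 1 * ζ) (deriv (Khat K) ζ - K 1) ζ := fun ζ hζ => by
    rw [mem_closedBall_zero_iff] at hζ
    simpa using (differentiableAt_khat hK (by linarith)).hasDerivAt.fun_sub
      ((hasDerivAt_id ζ).const_mul (K 1 : ℂ))
  have hbound : ∀ ζ ∈ closedBall (0 : ℂ) ρ, ‖deriv (Khat K) ζ - K 1‖ ≤ 4 * ρ := fun ζ hζ => by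
    rw [mem_closedBall_zero_iff] at hζ
    linarith [norm_deriv_khat_sub_le hK (hζ.trans hρ)]
  have h := (convex_closedBall (0 : ℂ) ρ).norm_image_sub_le_of_norm_hasDerivWithin_le
    (fun ζ hζ => (hderiv ζ hζ).hasDerivWithinAt) hbound
    (mem_closedBall_zero_iff.2 hw) (mem_closedBall_zero_iff.2 hz)
  rwa [show Khat K z - Khat K w - K 1 * (z - w) = Khat K z - K 1 * z - (Khat K w - K 1 * w) by
    ring]

lemma khat_zero : Khat K 0 = 0 := by
  simp [Khat]

lemma mul_norm_le_norm_khat (hK : ∀ n, |K (n + 1)| ≤ 1) {ρ : ℝ} (hρ : ρ ≤ 1 / 4) {z : ℂ}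
    (hz : ‖z‖ ≤ ρ) : (|K 1| - 4 * ρ) * ‖z‖ ≤ ‖Khat K z‖ := by
  have h := norm_khat_sub_khat_sub_le hK hρ hz (w := 0) (by simpa using (norm_nonneg z).trans hz)
  rw [khat_zero, sub_zero, sub_zero] at h
  have h' := norm_sub_norm_le ((K 1 : ℂ) * z) (Khat K z)
  rw [norm_sub_rev, norm_mul, Complex.norm_real, Real.norm_eq_abs] at h'
  nlinarith

lemma injOn_khat (hK : ∀ n, |K (n + 1)| ≤ 1) {ρ : ℝ} (hρ : ρ ≤ 1 / 4) (hρK : 4 * ρ < |K 1|) :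
    InjOn (Khat K) (closedBall 0 ρ) := by
  intro z hz w hw hzw
  rw [mem_closedBall_zero_iff] at hz hw
  have h := norm_khat_sub_khat_sub_le hK hρ hz hw
  rw [hzw, sub_self, zero_sub, norm_neg, norm_mul, Complex.norm_real, Real.norm_eq_abs] at h
  have : ‖z - w‖ = 0 := by nlinarith [norm_nonneg (z - w)]
  rwa [norm_eq_zero, sub_eq_zero] at this

lemma surjOn_khat (hK : ∀ n, |K (n + 1)| ≤ 1) {ρ : ℝ} (hρ0 : 0 ≤ ρ) (hρ : ρ ≤ 1 / 4)
    (hK1 : K 1 ≠ 0) :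
    SurjOn (Khat K) (closedBall 0 ρ) (closedBall 0 ((|K 1| - 4 * ρ) * ρ)) := by
  set a : ℂ := (K 1 : ℂ)
  have ha : a ≠ 0 := Complex.ofReal_ne_zero.2 hK1
  let f' : ℂ →L[ℂ] ℂ := a • ContinuousLinearMap.id ℂ ℂ
  let f'symm : f'.NonlinearRightInverse :=
    { toFun := fun y => a⁻¹ * y
      nnnorm := ‖a⁻¹‖₊
      bound' := fun y => (norm_mul _ _).le
      right_inv' := fun y => by simp [f', ha] }
  have happrox : ApproximatesLinearOn (Khat K) f' (closedBall 0 ρ) (4 * ρ).toNNReal := by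
    intro z hz w hw
    rw [mem_closedBall_zero_iff] at hz hw
    simpa [f', hρ0] using norm_khat_sub_khat_sub_le hK hρ hz hw
  have := happrox.surjOn_closedBall_of_nonlinearRightInverse f'symm hρ0 subset_rfl
  simpa [f'symm, khat_zero, hρ0, a] using this

end Transform

/-- A right inverse of `Khat K` near `0`, taking values in the disc where `Khat K` is injective. -/
noncomputable def khatInv (K : ℕ → ℝ) (w : ℂ) : ℂ :=
  Function.invFunOn (Khat K) (closedBall 0 (K 1 / 8)) w

section LocalInverse

variable {K : ℕ → ℝ}

lemma exists_mem_closedBall_khat_eq (hK : ∀ n, |K (n + 1)| ≤ 1) (hK1 : 0 < K 1) {w : ℂ}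
    (hw : ‖w‖ ≤ K 1 ^ 2 / 16) : ∃ z ∈ closedBall 0 (K 1 / 8), Khat K z = w := by
  have hK1' : K 1 ≤ 1 := (le_abs_self _).trans (hK 0)
  have hsurj := surjOn_khat hK (ρ := K 1 / 8) (by positivity) (by linarith) hK1.ne'
  rw [abs_of_pos hK1] at hsurj
  exact hsurj (mem_closedBall_zero_iff.2 (hw.trans_eq (by ring)))

lemma khatInv_mem_closedBall (hK : ∀ n, |K (n + 1)| ≤ 1) (hK1 : 0 < K 1) {w : ℂ}
    (hw : ‖w‖ ≤ K 1 ^ 2 / 16) : khatInv K w ∈ closedBall 0 (K 1 / 8) :=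
  Function.invFunOn_mem (exists_mem_closedBall_khat_eq hK hK1 hw)

lemma khat_khatInv (hK : ∀ n, |K (n + 1)| ≤ 1) (hK1 : 0 < K 1) {w : ℂ}
    (hw : ‖w‖ ≤ K 1 ^ 2 / 16) : Khat K (khatInv K w) = w :=
  Function.invFunOn_eq (exists_mem_closedBall_khat_eq hK hK1 hw)

lemma norm_khatInv_le (hK : ∀ n, |K (n + 1)| ≤ 1) (hK1 : 0 < K 1) {w : ℂ}
    (hw : ‖w‖ ≤ K 1 ^ 2 / 16) : ‖khatInv K w‖ ≤ 2 * ‖w‖ / K 1 := by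
  have hK1' : K 1 ≤ 1 := (le_abs_self _).trans (hK 0)
  have h := mul_norm_le_norm_khat hK (ρ := K 1 / 8) (by linarith)
    (mem_closedBall_zero_iff.1 (khatInv_mem_closedBall hK hK1 hw))
  rw [khat_khatInv hK hK1 hw, abs_of_pos hK1] at h
  rw [le_div_iff₀ hK1]
  linarith

lemma exp_re_mul_norm_khatInv_exp_neg_le (hK : ∀ n, |K (n + 1)| ≤ 1) (hK1 : 0 < K 1) {h : ℂ}
    (hw : ‖Complex.exp (-h)‖ ≤ K 1 ^ 2 / 16) :
    Real.exp h.re * ‖khatInv K (Complex.exp (-h))‖ ≤ 2 / K 1 := by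
  have hz := norm_khatInv_le hK hK1 hw
  rw [Complex.norm_exp, Complex.neg_re, Real.exp_neg] at hz
  calc Real.exp h.re * ‖khatInv K (Complex.exp (-h))‖
      ≤ Real.exp h.re * (2 * (Real.exp h.re)⁻¹ / K 1) := by gcongr
    _ = 2 / K 1 := by field_simp

lemma eq_khatInv (hK : ∀ n, |K (n + 1)| ≤ 1) (hK1 : 0 < K 1) {z w : ℂ}
    (hw : ‖w‖ ≤ K 1 ^ 2 / 16) (hz : ‖z‖ ≤ K 1 / 8) (hzw : Khat K z = w) : z = khatInv K w := by
  have hK1' : K 1 ≤ 1 := (le_abs_self _).trans (hK 0)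
  refine injOn_khat hK (by linarith) (by rw [abs_of_pos hK1]; linarith)
    (mem_closedBall_zero_iff.2 hz) (khatInv_mem_closedBall hK hK1 hw)
    (hzw.trans (khat_khatInv hK hK1 hw).symm)

end LocalInverse

section Pinning

variable {K : ℕ → ℝ}

lemma IsInterArrivalLaw.abs_le_one {α : ℝ} (hK : IsInterArrivalLaw α K) (n : ℕ) :
    |K (n + 1)| ≤ 1 := by
  obtain ⟨hpos, -, hsum, -⟩ := hK
  rw [abs_of_nonneg (hpos _ n.succ_pos)]
  exact le_hasSum hsum n fun j _ => hpos _ j.succ_pos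

theorem norm_pinZ_mul_sub_one_le (hK : ∀ n, |K (n + 1)| ≤ 1) {h z : ℂ} {A σ : ℝ}
    (hz : Khat K z = Complex.exp (-h)) (hzσ : ‖z‖ ≤ σ ^ 2) (hσ0 : 0 < σ) (hσ : σ ≤ 1 / 2)
    (hA : Real.exp h.re * ‖z‖ ≤ A) (hAσ : 12 * A * σ ≤ 1) {N : ℕ} (hN : N ≠ 0) :
    ‖pinZ K N h * Complex.exp h * deriv (Khat K) z * z ^ (N + 1) - 1‖ ≤ σ ^ N := by
  have hz1 : ‖z‖ < 1 / 2 := by nlinarith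
  have hA0 : 0 ≤ A := le_trans (by positivity) hA
  set q : ℕ → ℂ := fun i => Complex.exp h * K (i + 1) * z ^ (i + 1)
  have hq : HasSum q 1 := by
    have := (hasSum_khat hK (by linarith)).mul_left (Complex.exp h)
    rw [hz, ← Complex.exp_add, add_neg_cancel, Complex.exp_zero] at this
    simpa only [q, mul_assoc] using this
  have hqle : ∀ i, ‖q i‖ ≤ A * ‖z‖ ^ i := fun i => by
    rw [norm_mul, norm_mul, Complex.norm_exp, Complex.norm_real, Real.norm_eq_abs, norm_pow,
      pow_succ, ← mul_assoc, mul_right_comm _ _ ‖z‖]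
    calc Real.exp h.re * |K (i + 1)| * ‖z‖ * ‖z‖ ^ i ≤ Real.exp h.re * 1 * ‖z‖ * ‖z‖ ^ i := by
          gcongr; exact hK i
      _ ≤ A * ‖z‖ ^ i := by rw [mul_one]; gcongr
  have ht : ∀ m, ‖1 - ∑ i ∈ range m, q i‖ ≤ 2 * A * (σ ^ 2) ^ m := fun m =>
    (norm_sub_sum_range_le (norm_nonneg z) hz1.le hqle hq m).trans (by gcongr)
  have hμ : HasSum (fun i : ℕ => (i + 1) * q i) (Complex.exp h * z * deriv (Khat K) z) := by
    refine ((hasSum_deriv_khat hK (by linarith)).mul_left _).congr_fun fun i => ?_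
    simp only [q]
    ring
  have hu : ∀ N, pinZExt K (N + 1) h * z ^ (N + 1) =
      ∑ p ∈ antidiagonal N, q p.1 * (pinZExt K p.2 h * z ^ p.2) := fun N => by
    rw [pinZExt_succ, sum_mul]
    refine sum_congr rfl fun p hp => ?_
    rw [HasAntidiagonal.mem_antidiagonal] at hp
    rw [← hp, show p.1 + p.2 + 1 = (p.1 + 1) + p.2 by ring, pow_add]
    ring
  have := norm_mul_sub_one_le_of_renewal (u := fun N => pinZExt K N h * z ^ N) hσ0 hσ
    (by linarith) (by simp [pinZExt_zero]) hu ht hμ N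
  rw [pinZExt_eq_pinZ K h hN] at this
  convert this using 2
  ring

end Pinning

lemma norm_exp_neg_le_of_log_inv_le {c : ℝ} (hc : 0 < c) {h : ℂ} (hh : Real.log c⁻¹ ≤ h.re) :
    ‖Complex.exp (-h)‖ ≤ c := by
  rw [Real.log_inv] at hh
  rw [Complex.norm_exp, Complex.neg_re, ← Real.exp_log hc]
  exact Real.exp_le_exp.2 (by linarith)

lemma tendstoUniformlyOn_of_norm_sub_le_pow {α E : Type*} [SeminormedAddCommGroup E]
    {F : ℕ → α → E} {f : α → E} {s : Set α} {σ : ℝ} (hσ0 : 0 ≤ σ) (hσ : σ < 1)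
    (hF : ∀ᶠ N in atTop, ∀ x ∈ s, ‖F N x - f x‖ ≤ σ ^ N) : TendstoUniformlyOn F f atTop s := by
  rw [Metric.tendstoUniformlyOn_iff]
  intro ε hε
  filter_upwards [hF, (tendsto_pow_atTop_nhds_zero_of_lt_one hσ0 hσ).eventually (gt_mem_nhds hε)]
    with N hN hNε x hx
  rw [dist_eq_norm']
  exact (hN x hx).trans_lt hNε

theorem stmt6_general (α : ℝ) (K : ℕ → ℝ)
    (hK : IsInterArrivalLaw α K) :
    ∃ C : ℝ, 0 < C ∧ ∃ r ∈ Set.Ioo (0 : ℝ) 1, ∃ zfun : ℂ → ℂ,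
      (∀ h : ℂ, C ≤ h.re →
        (‖zfun h‖ < r ∧ Khat K (zfun h) = Complex.exp (-h)) ∧
        (∀ z : ℂ, ‖z‖ < r → Khat K z = Complex.exp (-h) → z = zfun h) ∧
        deriv (Khat K) (zfun h) ≠ 0) ∧
      TendstoUniformlyOn
        (fun (N : ℕ) (h : ℂ) =>
          pinZ K N h * Complex.exp h * deriv (Khat K) (zfun h) * (zfun h) ^ (N + 1))
        (fun _ => 1) atTop {h : ℂ | C ≤ h.re} := by
  have hK1 : 0 < K 1 := hK.2.1
  have hK1le : K 1 ≤ 1 := (le_abs_self _).trans (hK.abs_le_one 0)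
  -- `C` is chosen so that `2 ‖e^{-h}‖ / K 1 ≤ (K 1 / 24) ^ 2` on `C ≤ Re h`.
  set C := Real.log (K 1 ^ 3 / 1152)⁻¹
  have hexp : ∀ h : ℂ, C ≤ h.re → ‖Complex.exp (-h)‖ ≤ K 1 ^ 3 / 1152 := fun h =>
    norm_exp_neg_le_of_log_inv_le (by positivity)
  have hw : ∀ h : ℂ, C ≤ h.re → ‖Complex.exp (-h)‖ ≤ K 1 ^ 2 / 16 := fun h hh =>
    (hexp h hh).trans (by nlinarith [pow_pos hK1 2])
  have hz : ∀ h : ℂ, C ≤ h.re → ‖khatInv K (Complex.exp (-h))‖ ≤ (K 1 / 24) ^ 2 := fun h hh =>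
    (norm_khatInv_le hK.abs_le_one hK1 (hw h hh)).trans (by
      rw [div_le_iff₀ hK1]; nlinarith [hexp h hh])
  refine ⟨C, Real.log_pos ?_, K 1 / 8, ⟨by positivity, by linarith⟩,
    fun h => khatInv K (Complex.exp (-h)), fun h hh => ⟨⟨by nlinarith [hz h hh], ?_⟩, ?_, ?_⟩, ?_⟩
  · rw [inv_div, lt_div_iff₀ (by positivity)]
    nlinarith [pow_le_one₀ hK1.le hK1le (n := 3)]
  · exact khat_khatInv hK.abs_le_one hK1 (hw h hh)
  · exact fun z hz hzK => eq_khatInv hK.abs_le_one hK1 (hw h hh) hz.le hzK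
  · exact deriv_khat_ne_zero hK.abs_le_one (by nlinarith [hz h hh])
      (by rw [abs_of_pos hK1]; nlinarith [hz h hh])
  · refine tendstoUniformlyOn_of_norm_sub_le_pow (σ := K 1 / 24) (by positivity) (by linarith)
      ((eventually_ne_atTop 0).mono fun N hN h hh => ?_)
    exact norm_pinZ_mul_sub_one_le hK.abs_le_one (khat_khatInv hK.abs_le_one hK1 (hw h hh))
      (hz h hh) (by positivity) (by linarith)
      (exp_re_mul_norm_khatInv_exp_neg_le hK.abs_le_one hK1 (hw h hh)) (by field_simp; norm_num) hN

theorem stmt6 (α : ℝ) (hα : α ∈ Set.Ioo (0 : ℝ) 1) (K : ℕ → ℝ)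
    (hK : IsInterArrivalLaw α K) :
    ∃ C : ℝ, 0 < C ∧ ∃ r ∈ Set.Ioo (0 : ℝ) 1, ∃ zfun : ℂ → ℂ,
      (∀ h : ℂ, C ≤ h.re →
        (‖zfun h‖ < r ∧ Khat K (zfun h) = Complex.exp (-h)) ∧
        (∀ z : ℂ, ‖z‖ < r → Khat K z = Complex.exp (-h) → z = zfun h) ∧
        deriv (Khat K) (zfun h) ≠ 0) ∧
      TendstoUniformlyOn
        (fun (N : ℕ) (h : ℂ) =>
          pinZ K N h * Complex.exp h * deriv (Khat K) (zfun h) * (zfun h) ^ (N + 1))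
        (fun _ => 1) atTop {h : ℂ | C ≤ h.re} :=
  stmt6_general α K hK
end

section
/- Let α ∈ (0,1). Then on the open interval (0,π): the function θ ↦ |1−(1−e^{−iθ})^α| is strictly decreasing, and the function θ ↦ −Arg(1−(1−e^{−iθ})^α) is strictly increasing. Equivalently, both the real part and the imaginary part of the critical-curve parametrization θ ↦ −Log(1−(1−e^{−iθ})^α) are strictly increasing on (0,π). -/
/-!
Put `u = (π - θ) / 2 ∈ (0, π/2)`. Then `1 - e^{-iθ} = 1 + e^{2iu} = 2 cos u · e^{iu}`, so
`(1 - e^{-iθ})^α = ρ e^{iαu}` with `ρ = (2 cos u)^α`, and the curve is `-F u` with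
`F u = Log (1 - ρ e^{iαu})`. Differentiating, `F' u` is a positive multiple of
`i e^{i(1+α)u} / (ρ e^{iαu} - 1)`, whose real and imaginary parts have the signs of
`sin ((1+α)u) - ρ sin u` and `ρ cos u - cos ((1+α)u)`. The first is positive by strict concavity
of `sin` on `[u, 2u]` and Bernoulli's inequality; the second by the tangent line of `cos` at `u`,
`(2 cos u)^α ≥ 1 + α log (2 cos u)` and `cos u + u sin u ≥ 1`. Modulus and argument are the
exponential of the real part and the imaginary part of the logarithm.
-/

open Real Set
open Complex (I normSq slitPlane)

theorem one_le_cos_add_mul_sin {u : ℝ} (hu₀ : 0 ≤ u) (hu₁ : u ≤ π / 2) :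
    1 ≤ cos u + u * sin u := by
  have hcos : 1 - u ^ 2 / 2 ≤ cos u := one_sub_sq_div_two_le_cos
  have hsin : 2 / π * u ≤ sin u := mul_le_sin hu₀ hu₁
  have hπ : 1 / 2 ≤ 2 / π := by rw [div_le_div_iff₀ two_pos pi_pos]; linarith [pi_le_four]
  nlinarith [mul_le_mul_of_nonneg_left hsin hu₀, mul_le_mul_of_nonneg_right hπ (sq_nonneg u)]

theorem rpow_two_mul_cos_mul_sin_lt_sin {α u : ℝ} (hα : α ∈ Ioo 0 1) (hu : u ∈ Ioo 0 (π / 2)) :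
    (2 * cos u) ^ α * sin u < sin ((1 + α) * u) := by
  obtain ⟨hα₀, hα₁⟩ := hα
  obtain ⟨hu₀, hu₁⟩ := hu
  have hsin : 0 < sin u := sin_pos_of_pos_of_lt_pi hu₀ (by linarith [pi_pos])
  have hcos : 0 < cos u := cos_pos_of_mem_Ioo ⟨by linarith, hu₁⟩
  have hconcave : (1 - α) * sin u + α * sin (2 * u) < sin ((1 - α) * u + α * (2 * u)) :=
    strictConcaveOn_sin_Icc.2 ⟨hu₀.le, by linarith⟩ ⟨by linarith, by linarith⟩ (by linarith)
      (by linarith) hα₀ (by ring)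
  have hbernoulli : (2 * cos u) ^ α ≤ 1 + α * (2 * cos u - 1) := by
    simpa using rpow_one_add_le_one_add_mul_self (s := 2 * cos u - 1) (by linarith) hα₀.le hα₁.le
  calc (2 * cos u) ^ α * sin u ≤ (1 + α * (2 * cos u - 1)) * sin u := by gcongr
    _ = (1 - α) * sin u + α * sin (2 * u) := by rw [sin_two_mul]; ring
    _ < sin ((1 + α) * u) := by convert hconcave using 2; ring

theorem cos_lt_rpow_two_mul_cos_mul_cos {α u : ℝ} (hα₀ : 0 < α) (hα₁ : α ≤ 1)
    (hu : u ∈ Ioo 0 (π / 2)) : cos ((1 + α) * u) < (2 * cos u) ^ α * cos u := by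
  obtain ⟨hu₀, hu₁⟩ := hu
  have hcos : 0 < cos u := cos_pos_of_mem_Ioo ⟨by linarith, hu₁⟩
  have hrhs : 0 < (2 * cos u) ^ α * cos u := by positivity
  rcases le_or_gt (π / 2) ((1 + α) * u) with hbig | hsmall
  · have : cos ((1 + α) * u) ≤ 0 :=
      cos_nonpos_of_pi_div_two_le_of_le hbig (by nlinarith)
    linarith
  have htangent : cos ((1 + α) * u) < cos u - α * u * sin u := by
    have := strictConcaveOn_cos_Icc.slope_lt_of_hasDerivAt (x := u) (y := (1 + α) * u)
      ⟨by linarith, hu₁.le⟩ ⟨by nlinarith, hsmall.le⟩ (by nlinarith) (hasDerivAt_cos u)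
    rw [slope_def_field, div_lt_iff₀ (by nlinarith)] at this
    linarith
  have hlog : cos u - 1 / 2 ≤ cos u * Real.log (2 * cos u) := by
    have := one_sub_inv_le_log_of_pos (by positivity : 0 < 2 * cos u)
    have h : cos u * (1 - (2 * cos u)⁻¹) = cos u - 1 / 2 := by field_simp
    nlinarith
  have hexp : 1 + α * Real.log (2 * cos u) ≤ (2 * cos u) ^ α := by
    rw [rpow_def_of_pos (by positivity)]
    linarith [add_one_le_exp (Real.log (2 * cos u) * α)]
  have := one_le_cos_add_mul_sin hu₀.le hu₁.le
  calc cos ((1 + α) * u) < cos u - α * u * sin u := htangent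
    _ ≤ (1 + α * Real.log (2 * cos u)) * cos u := by nlinarith
    _ ≤ (2 * cos u) ^ α * cos u := by gcongr

theorem strictMonoOn_comp_of_hasDerivAt_pos {E : Type*} [NormedAddCommGroup E] [NormedSpace ℝ E]
    {D : Set ℝ} (hD : Convex ℝ D) {f f' : ℝ → E} (ℓ : E →L[ℝ] ℝ)
    (hf : ∀ x ∈ D, HasDerivAt f (f' x) x) (hpos : ∀ x ∈ D, 0 < ℓ (f' x)) :
    StrictMonoOn (fun x => ℓ (f x)) D := by
  have hℓf : ∀ x ∈ D, HasDerivAt (fun x => ℓ (f x)) (ℓ (f' x)) x := fun x hx =>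
    ℓ.hasFDerivAt.comp_hasDerivAt x (hf x hx)
  refine strictMonoOn_of_deriv_pos hD (fun x hx => (hℓf x hx).continuousAt.continuousWithinAt)
    fun x hx => ?_
  rw [(hℓf x (interior_subset hx)).deriv]
  exact hpos x (interior_subset hx)

theorem half_pi_sub_mem_Ioo {θ : ℝ} (hθ : θ ∈ Ioo 0 π) : (π - θ) / 2 ∈ Ioo 0 (π / 2) :=
  ⟨by linarith [hθ.2], by linarith [hθ.1]⟩

theorem StrictMonoOn.neg_comp_half_pi_sub {g : ℝ → ℝ} (hg : StrictMonoOn g (Ioo 0 (π / 2))) :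
    StrictMonoOn (fun θ => -g ((π - θ) / 2)) (Ioo 0 π) := by
  have hanti : StrictAntiOn (fun θ : ℝ => (π - θ) / 2) (Ioo 0 π) :=
    fun a _ b _ hab => by linarith
  exact (hg.comp_strictAntiOn hanti fun θ => half_pi_sub_mem_Ioo).neg

theorem re_I_mul_exp_div_mul_exp_sub_one (ψ φ ρ : ℝ) :
    (I * Complex.exp (ψ * I) / (ρ * Complex.exp (φ * I) - 1)).re
      = (sin ψ - ρ * sin (ψ - φ)) / normSq (ρ * Complex.exp (φ * I) - 1) := by
  rw [Complex.div_re, ← add_div]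
  congr 1
  simp [Complex.exp_ofReal_mul_I_re, Complex.exp_ofReal_mul_I_im, Real.sin_sub]
  ring

theorem im_I_mul_exp_div_mul_exp_sub_one (ψ φ ρ : ℝ) :
    (I * Complex.exp (ψ * I) / (ρ * Complex.exp (φ * I) - 1)).im
      = (ρ * cos (ψ - φ) - cos ψ) / normSq (ρ * Complex.exp (φ * I) - 1) := by
  rw [Complex.div_im, ← sub_div]
  congr 1
  simp [Complex.exp_ofReal_mul_I_re, Complex.exp_ofReal_mul_I_im, Real.cos_sub]
  ring

theorem one_sub_exp_neg_mul_I (θ : ℝ) :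
    1 - Complex.exp (-θ * I) = 1 + Complex.exp (2 * ((π - θ) / 2 : ℝ) * I) := by
  have : 2 * ((π - θ) / 2 : ℝ) * I = -θ * I + π * I := by push_cast; ring
  rw [this, Complex.exp_add, Complex.exp_pi_mul_I]
  ring

theorem one_add_exp_two_mul_I {u : ℝ} (hu : 0 < cos u) :
    1 + Complex.exp (2 * u * I) = Complex.exp (Real.log (2 * cos u) + u * I) := by
  rw [Complex.exp_add, ← Complex.ofReal_exp, Real.exp_log (by positivity), Complex.ofReal_mul,
    Complex.ofReal_cos, Complex.ofReal_ofNat, Complex.two_cos, add_mul, ← Complex.exp_add,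
    ← Complex.exp_add, neg_mul, neg_add_cancel, Complex.exp_zero, add_comm]
  ring_nf

theorem one_add_exp_two_mul_I_cpow {u : ℝ} (hu : u ∈ Ioo (-(π / 2)) (π / 2)) (α : ℂ) :
    (1 + Complex.exp (2 * u * I)) ^ α = Complex.exp ((Real.log (2 * cos u) + u * I) * α) := by
  rw [one_add_exp_two_mul_I (cos_pos_of_mem_Ioo hu),
    Complex.cpow_def_of_ne_zero (Complex.exp_ne_zero _), Complex.log_exp] <;>
    simp <;> linarith [hu.1, hu.2, pi_pos]

theorem exp_log_two_mul_cos_add_mul_I_mul {u : ℝ} (hu : 0 < cos u) (α : ℝ) :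
    Complex.exp ((Real.log (2 * cos u) + u * I) * α)
      = ((2 * cos u) ^ α : ℝ) * Complex.exp ((α * u : ℝ) * I) := by
  rw [rpow_def_of_pos (by positivity), Complex.ofReal_exp, ← Complex.exp_add]
  push_cast
  ring_nf

theorem hasDerivAt_log_two_mul_cos_add_mul_I {u : ℝ} (hu : 0 < cos u) :
    HasDerivAt (fun u : ℝ => (Real.log (2 * cos u) : ℂ) + u * I)
      (I * Complex.exp (u * I) / cos u) u := by
  have hlog := ((Real.hasDerivAt_cos u).const_mul 2).log (by positivity)
  refine (hlog.ofReal_comp.add ((hasDerivAt_id u).ofReal_comp.mul_const I)).congr_deriv ?_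
  have hcos : Complex.cos u ≠ 0 := by exact_mod_cast hu.ne'
  push_cast
  rw [Complex.exp_mul_I]
  field_simp
  linear_combination (-Complex.sin u) * Complex.I_sq

theorem im_one_sub_exp_log_two_mul_cos_neg {α u : ℝ} (hα : α ∈ Ioo 0 1) (hu : u ∈ Ioo 0 (π / 2)) :
    (1 - Complex.exp ((Real.log (2 * cos u) + u * I) * α)).im < 0 := by
  have hcos : 0 < cos u := cos_pos_of_mem_Ioo ⟨by linarith [hu.1, pi_pos], hu.2⟩
  have hsin : 0 < sin (α * u) := sin_pos_of_pos_of_lt_pi (mul_pos hα.1 hu.1)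
    (by nlinarith [mul_lt_mul_of_pos_right hα.2 hu.1, hu.2, pi_pos])
  rw [exp_log_two_mul_cos_add_mul_I_mul hcos, Complex.sub_im, Complex.im_ofReal_mul,
    Complex.exp_ofReal_mul_I_im]
  simp only [Complex.one_im, zero_sub, neg_lt_zero]
  positivity

theorem hasDerivAt_log_one_sub_exp {α u : ℝ} (hu : 0 < cos u)
    (hslit : 1 - Complex.exp ((Real.log (2 * cos u) + u * I) * α) ∈ slitPlane) :
    HasDerivAt (fun u : ℝ => Complex.log (1 - Complex.exp ((Real.log (2 * cos u) + u * I) * α)))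
      (((α * (2 * cos u) ^ α / cos u : ℝ) : ℂ) * (I * Complex.exp (((1 + α) * u : ℝ) * I)
        / (((2 * cos u) ^ α : ℝ) * Complex.exp ((α * u : ℝ) * I) - 1))) u := by
  have hL := (hasDerivAt_log_two_mul_cos_add_mul_I hu).mul_const (α : ℂ)
  refine ((hL.cexp.const_sub 1).clog_real hslit).congr_deriv ?_
  rw [exp_log_two_mul_cos_add_mul_I_mul hu] at hslit ⊢
  have hsub := Complex.slitPlane_ne_zero hslit
  have hsub' : ((2 * cos u) ^ α : ℝ) * Complex.exp ((α * u : ℝ) * I) - 1 ≠ 0 := by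
    rwa [← neg_ne_zero, neg_sub]
  have hcos : Complex.cos u ≠ 0 := by exact_mod_cast hu.ne'
  rw [show (((1 + α) * u : ℝ) : ℂ) * I = u * I + (α * u : ℝ) * I by push_cast; ring,
    Complex.exp_add]
  push_cast at hsub hsub' ⊢
  field_simp
  ring

theorem strictMonoOn_re_and_im_log_one_sub_exp {α : ℝ} (hα : α ∈ Ioo 0 1) :
    StrictMonoOn (fun u : ℝ =>
      (Complex.log (1 - Complex.exp ((Real.log (2 * cos u) + u * I) * α))).re) (Ioo 0 (π / 2)) ∧
    StrictMonoOn (fun u : ℝ =>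
      (Complex.log (1 - Complex.exp ((Real.log (2 * cos u) + u * I) * α))).im) (Ioo 0 (π / 2)) := by
  have hcos : ∀ u ∈ Ioo 0 (π / 2), 0 < cos u := fun u hu =>
    cos_pos_of_mem_Ioo ⟨by linarith [hu.1, pi_pos], hu.2⟩
  have him := fun u (hu : u ∈ Ioo 0 (π / 2)) => im_one_sub_exp_log_two_mul_cos_neg hα hu
  have hderiv : ∀ u ∈ Ioo 0 (π / 2), HasDerivAt _ _ u := fun u hu =>
    hasDerivAt_log_one_sub_exp (α := α) (hcos u hu)
      (Complex.mem_slitPlane_iff.2 (Or.inr (him u hu).ne))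
  have hnormSq : ∀ u ∈ Ioo 0 (π / 2),
      0 < normSq (((2 * cos u) ^ α : ℝ) * Complex.exp ((α * u : ℝ) * I) - 1) := by
    intro u hu
    have h := him u hu
    rw [exp_log_two_mul_cos_add_mul_I_mul (hcos u hu)] at h
    refine Complex.normSq_pos.2 fun h0 => ?_
    rw [← neg_sub, h0] at h
    simp at h
  have hcoeff : ∀ u ∈ Ioo 0 (π / 2), 0 < α * (2 * cos u) ^ α / cos u := fun u hu => by
    have := hcos u hu; have := hα.1; positivity
  have hshift : ∀ u : ℝ, (1 + α) * u - α * u = u := fun u => by ring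
  constructor
  · refine strictMonoOn_comp_of_hasDerivAt_pos (convex_Ioo _ _) Complex.reCLM hderiv fun u hu => ?_
    rw [Complex.reCLM_apply, Complex.re_ofReal_mul, re_I_mul_exp_div_mul_exp_sub_one, hshift]
    exact mul_pos (hcoeff u hu)
      (div_pos (sub_pos.2 (rpow_two_mul_cos_mul_sin_lt_sin hα hu)) (hnormSq u hu))
  · refine strictMonoOn_comp_of_hasDerivAt_pos (convex_Ioo _ _) Complex.imCLM hderiv fun u hu => ?_
    rw [Complex.imCLM_apply, Complex.im_ofReal_mul, im_I_mul_exp_div_mul_exp_sub_one, hshift]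
    exact mul_pos (hcoeff u hu)
      (div_pos (sub_pos.2 (cos_lt_rpow_two_mul_cos_mul_cos hα.1 hα.2.le hu)) (hnormSq u hu))

theorem one_sub_one_sub_exp_cpow {θ : ℝ} (hθ : θ ∈ Ioo 0 π) (α : ℝ) :
    1 - (1 - Complex.exp (-(θ : ℂ) * I)) ^ (α : ℂ)
      = 1 - Complex.exp ((Real.log (2 * cos ((π - θ) / 2)) + ((π - θ) / 2 : ℝ) * I) * α) := by
  rw [one_sub_exp_neg_mul_I, one_add_exp_two_mul_I_cpow]
  constructor <;> linarith [hθ.1, hθ.2]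

theorem stmt18 (α : ℝ) (hα : α ∈ Set.Ioo (0 : ℝ) 1) :
    StrictAntiOn
      (fun θ : ℝ =>
        ‖1 - (1 - Complex.exp (-(θ : ℂ) * Complex.I)) ^ (α : ℂ)‖)
      (Set.Ioo 0 π) ∧
    StrictMonoOn
      (fun θ : ℝ =>
        -Complex.arg (1 - (1 - Complex.exp (-(θ : ℂ) * Complex.I)) ^ (α : ℂ)))
      (Set.Ioo 0 π) ∧
    StrictMonoOn
      (fun θ : ℝ =>
        (-Complex.log (1 - (1 - Complex.exp (-(θ : ℂ) * Complex.I)) ^ (α : ℂ))).re)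
      (Set.Ioo 0 π) ∧
    StrictMonoOn
      (fun θ : ℝ =>
        (-Complex.log (1 - (1 - Complex.exp (-(θ : ℂ) * Complex.I)) ^ (α : ℂ))).im)
      (Set.Ioo 0 π) := by
  obtain ⟨hreF, himF⟩ := strictMonoOn_re_and_im_log_one_sub_exp hα
  have hre : StrictMonoOn (fun θ : ℝ =>
      (-Complex.log (1 - (1 - Complex.exp (-(θ : ℂ) * I)) ^ (α : ℂ))).re) (Ioo 0 π) :=
    hreF.neg_comp_half_pi_sub.congr fun θ hθ => by
      simp only [one_sub_one_sub_exp_cpow hθ, Complex.neg_re]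
  have him : StrictMonoOn (fun θ : ℝ =>
      (-Complex.log (1 - (1 - Complex.exp (-(θ : ℂ) * I)) ^ (α : ℂ))).im) (Ioo 0 π) :=
    himF.neg_comp_half_pi_sub.congr fun θ hθ => by
      simp only [one_sub_one_sub_exp_cpow hθ, Complex.neg_im]
  have hne : ∀ θ ∈ Ioo 0 π, 1 - (1 - Complex.exp (-(θ : ℂ) * I)) ^ (α : ℂ) ≠ 0 := by
    intro θ hθ h
    have := im_one_sub_exp_log_two_mul_cos_neg hα (half_pi_sub_mem_Ioo hθ)
    rw [← one_sub_one_sub_exp_cpow hθ, h, Complex.zero_im] at this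
    exact this.false
  refine ⟨fun a ha b hb hab => ?_,
    by simpa only [Complex.neg_im, Complex.log_im] using him, hre, him⟩
  have h := hre ha hb hab
  simp only [Complex.neg_re, Complex.log_re, neg_lt_neg_iff] at h
  exact (Real.log_lt_log_iff (norm_pos_iff.2 (hne b hb)) (norm_pos_iff.2 (hne a ha))).1 h
end
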